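/- arXiv:1905.12888 — 6 statements merged into one kernel-verified Lean document; each statement's English description precedes it below -/
import Mathlib

section
/- Let A and B be finite nonempty sets, let P and Q be probability mass functions on A × B with Q(a,b) > 0 for all (a,b), and suppose the conditional distributions of b given a agree, i.e., P(a,b)·Q(a) = Q(a,b)·P(a) for all a, b, where P(a) = ∑_b P(a,b), Q(a) = ∑_b Q(a,b) are the A-marginals and P(b) = ∑_a P(a,b), Q(b) = ∑_a Q(a,b) are the B-marginals. Then for every function f : ℝ → ℝ convex on [0,∞), ∑_{a∈A} Q(a)·f(P(a)/Q(a)) ≥ ∑_{b∈B} Q(b)·f(P(b)/Q(b)). -/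
/-! Equal conditionals mean that the likelihood ratio `P (a, b) / Q (a, b)` depends on `a` only,
where it equals `P(a) / Q(a)`. Hence the `A`-side divergence is `∑ (a, b), Q (a, b) * f (P / Q)`, and
grouping this sum by `b` and applying Jensen's inequality to each group, with weights
`Q (a, b) / Q(b)`, gives the `B`-side divergence as a lower bound. -/

open Finset

/-- The perspective `(q, p) ↦ q * f (p / q)` of a convex `f` is subadditive; for
`f x = x * log x` this is the log-sum inequality. -/
theorem ConvexOn.sum_mul_map_div_le {ι : Type*} {f : ℝ → ℝ} (hf : ConvexOn ℝ (Set.Ici 0) f)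
    (s : Finset ι) {p q : ι → ℝ} (hp : ∀ i ∈ s, 0 ≤ p i) (hq : ∀ i ∈ s, 0 < q i) :
    (∑ i ∈ s, q i) * f ((∑ i ∈ s, p i) / ∑ i ∈ s, q i) ≤ ∑ i ∈ s, q i * f (p i / q i) := by
  rcases s.eq_empty_or_nonempty with rfl | hs
  · simp
  set S := ∑ i ∈ s, q i
  have hS : 0 < S := sum_pos hq hs
  have hweights : ∑ i ∈ s, q i / S = 1 := by rw [← sum_div, div_self hS.ne']
  have hjensen := hf.map_sum_le (fun i hi => (div_pos (hq i hi) hS).le) hweights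
    (fun i hi => Set.mem_Ici.2 (div_nonneg (hp i hi) (hq i hi).le))
  have hcenter : ∑ i ∈ s, (q i / S) • (p i / q i) = (∑ i ∈ s, p i) / S := by
    rw [sum_div]
    refine sum_congr rfl fun i hi => ?_
    rw [smul_eq_mul, mul_comm, div_mul_div_cancel₀ (hq i hi).ne']
  calc S * f ((∑ i ∈ s, p i) / S)
      ≤ S * ∑ i ∈ s, (q i / S) • f (p i / q i) := by
        rw [← hcenter]; exact mul_le_mul_of_nonneg_left hjensen hS.le
    _ = ∑ i ∈ s, q i * f (p i / q i) := by
        rw [mul_sum]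
        refine sum_congr rfl fun i _ => ?_
        rw [smul_eq_mul, ← mul_assoc, mul_div_cancel₀ _ hS.ne']

theorem information_loss_general {A B : Type*} [Fintype A] [Fintype B]
    (P Q : A × B → ℝ)
    (hPnonneg : ∀ x, 0 ≤ P x)
    (hQpos : ∀ x, 0 < Q x)
    (hcond : ∀ a b, P (a, b) * (∑ b', Q (a, b')) = Q (a, b) * (∑ b', P (a, b')))
    (f : ℝ → ℝ) (hf : ConvexOn ℝ (Set.Ici (0 : ℝ)) f) :
    ∑ a : A, (∑ b : B, Q (a, b)) * f ((∑ b : B, P (a, b)) / (∑ b : B, Q (a, b))) ≥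
      ∑ b : B, (∑ a : A, Q (a, b)) * f ((∑ a : A, P (a, b)) / (∑ a : A, Q (a, b))) := by
  have hratio : ∀ a b, P (a, b) / Q (a, b) = (∑ b', P (a, b')) / ∑ b', Q (a, b') := by
    intro a b
    have hQa : 0 < ∑ b', Q (a, b') :=
      sum_pos (fun b' _ => hQpos (a, b')) ⟨b, mem_univ b⟩
    rw [div_eq_div_iff (hQpos (a, b)).ne' hQa.ne', hcond, mul_comm]
  calc ∑ b, (∑ a, Q (a, b)) * f ((∑ a, P (a, b)) / ∑ a, Q (a, b))
      ≤ ∑ b, ∑ a, Q (a, b) * f (P (a, b) / Q (a, b)) :=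
        sum_le_sum fun b _ => hf.sum_mul_map_div_le univ
          (fun a _ => hPnonneg (a, b)) (fun a _ => hQpos (a, b))
    _ = ∑ a, (∑ b, Q (a, b)) * f ((∑ b, P (a, b)) / ∑ b, Q (a, b)) := by
        simp only [hratio, sum_mul]
        exact sum_comm

/-- **Information loss.** If `P` and `Q` are strictly-positive-denominator pmfs on `A × B`
whose conditional distributions of `b` given `a` agree, then for every `f` convex on
`[0, ∞)`, the f-divergence between the `A`-marginals dominates the f-divergence
between the `B`-marginals. -/
theorem information_loss {A B : Type*} [Fintype A] [Nonempty A] [Fintype B] [Nonempty B]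
    (P Q : A × B → ℝ)
    (hPnonneg : ∀ x, 0 ≤ P x) (hPsum : ∑ x, P x = 1)
    (hQpos : ∀ x, 0 < Q x) (hQsum : ∑ x, Q x = 1)
    (hcond : ∀ a b, P (a, b) * (∑ b', Q (a, b')) = Q (a, b) * (∑ b', P (a, b')))
    (f : ℝ → ℝ) (hf : ConvexOn ℝ (Set.Ici (0 : ℝ)) f) :
    ∑ a : A, (∑ b : B, Q (a, b)) * f ((∑ b : B, P (a, b)) / (∑ b : B, Q (a, b))) ≥
      ∑ b : B, (∑ a : A, Q (a, b)) * f ((∑ a : A, P (a, b)) / (∑ a : A, Q (a, b))) :=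
  information_loss_general P Q hPnonneg hQpos hcond f hf
end

section
/- In a finite-horizon MDP, let π and π* be stochastic policies, and assume ρ₀(s) > 0, P(s'|s,a) > 0, π(a|s) > 0 and π*(a|s) > 0 for all s, s' ∈ S, a ∈ A. Then for every function f : ℝ → ℝ convex on [0,∞), the f-divergence between trajectory distributions is lower bounded by the f-divergence between average state-action distributions: ∑_τ ρ_π(τ)·f(ρ_{π*}(τ)/ρ_π(τ)) ≥ ∑_{(s,a)∈S×A} ρ_π(s)·π(a|s)·f( (ρ_{π*}(s)·π*(a|s)) / (ρ_π(s)·π(a|s)) ). -/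
noncomputable section

/-- Time-`t` state distribution of a policy `π` in a finite MDP:
`ρ_π^0 = ρ₀` and `ρ_π^{t+1}(s) = ∑_{s',a} ρ_π^t(s') · π(a|s') · P(s|s',a)`. -/
def stateDist {S A : Type*} [Fintype S] [Fintype A]
    (ρ₀ : S → ℝ) (P : S → A → S → ℝ) (π : S → A → ℝ) : ℕ → S → ℝ
  | 0 => ρ₀
  | t + 1 => fun s => ∑ s' : S, ∑ a : A, stateDist ρ₀ P π t s' * π s' a * P s' a s

/-- Average state distribution `ρ_π(s) = (1/T) ∑_{t=1}^T ρ_π^{t-1}(s)`. -/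
def avgStateDist {S A : Type*} [Fintype S] [Fintype A]
    (ρ₀ : S → ℝ) (P : S → A → S → ℝ) (π : S → A → ℝ) (T : ℕ) (s : S) : ℝ :=
  (1 / (T : ℝ)) * ∑ t ∈ Finset.range T, stateDist ρ₀ P π t s

/-- The state `s_{t-1}` preceding the `t`-th action in the trajectory
`τ = (s₀, a₁, s₁, …, a_T, s_T)`, encoded as `τ = (s₀, fun t => (a_{t+1}, s_{t+1}))`. -/
def prevState {S A : Type*} {T : ℕ} (τ : S × (Fin T → A × S)) (t : Fin T) : S :=
  if _h : (t : ℕ) = 0 then τ.1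
  else (τ.2 ⟨(t : ℕ) - 1, lt_of_le_of_lt (Nat.pred_le _) t.isLt⟩).2

/-- Probability of a trajectory `τ = (s₀, a₁, s₁, …, a_T, s_T)` induced by policy `π`:
`ρ_π(τ) = ρ₀(s₀) ∏_{t=1}^T π(a_t|s_{t-1}) P(s_t|s_{t-1},a_t)`. -/
def trajProb {S A : Type*} {T : ℕ}
    (ρ₀ : S → ℝ) (P : S → A → S → ℝ) (π : S → A → ℝ) (τ : S × (Fin T → A × S)) : ℝ :=
  ρ₀ τ.1 * ∏ t : Fin T,
    (π (prevState τ t) (τ.2 t).1 * P (prevState τ t) (τ.2 t).1 (τ.2 t).2)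


namespace TrajAux

set_option linter.unusedSectionVars false
variable {S A : Type*} [Fintype S] [Fintype A]

def step (P : S → A → S → ℝ) (π : S → A → ℝ) (s' : S) (y : A × S) : ℝ :=
  π s' y.1 * P s' y.1 y.2

def W (P : S → A → S → ℝ) (π : S → A → ℝ) {n : ℕ} (s₀ : S) (σ : Fin n → A × S) : ℝ :=
  ∏ t : Fin n, step P π (prevState (s₀, σ) t) (σ t)

lemma trajProb_eq (ρ₀ : S → ℝ) (P : S → A → S → ℝ) (π : S → A → ℝ) {n : ℕ}
    (s₀ : S) (σ : Fin n → A × S) :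
    trajProb ρ₀ P π (s₀, σ) = ρ₀ s₀ * W P π s₀ σ := rfl

lemma prevState_zero {n : ℕ} (s₀ : S) (σ : Fin (n+1) → A × S) :
    prevState (s₀, σ) 0 = s₀ := rfl

lemma prevState_cons_succ {n : ℕ} (s₀ : S) (y : A × S) (σ : Fin n → A × S) (t : Fin n) :
    prevState (s₀, Fin.cons y σ) t.succ = prevState (y.2, σ) t := by
  rcases t with ⟨k, hk⟩
  cases k with
  | zero => simp [prevState]
  | succ m =>
    have h1 : (⟨m + 1, by omega⟩ : Fin (n+1)) = Fin.succ ⟨m, by omega⟩ := rfl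
    simp only [prevState, Fin.succ_mk, Nat.add_sub_cancel]
    rw [h1, Fin.cons_succ]
    simp

lemma W_cons (P : S → A → S → ℝ) (π : S → A → ℝ) {n : ℕ} (s₀ : S) (y : A × S)
    (σ : Fin n → A × S) :
    W P π s₀ (Fin.cons y σ) = step P π s₀ y * W P π y.2 σ := by
  rw [W, Fin.prod_univ_succ]
  congr 1
  exact Finset.prod_congr rfl fun t _ => by rw [prevState_cons_succ, Fin.cons_succ]

lemma sum_pi_succ {X : Type*} [Fintype X] {M : Type*} [AddCommMonoid M] {n : ℕ}
    (F : (Fin (n+1) → X) → M) :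
    ∑ σ : Fin (n+1) → X, F σ = ∑ y : X, ∑ σ : Fin n → X, F (Fin.cons y σ) := by
  rw [← Fintype.sum_equiv (Fin.consEquiv fun _ => X) (fun p => F (Fin.cons p.1 p.2)) F
    (fun p => rfl), Fintype.sum_prod_type]

lemma sum_W (P : S → A → S → ℝ) (π : S → A → ℝ)
    (hPsum : ∀ s a, ∑ s', P s a s' = 1) (hπsum : ∀ s, ∑ a, π s a = 1) :
    ∀ (n : ℕ) (s₀ : S), ∑ σ : Fin n → A × S, W P π s₀ σ = 1 := by
  intro n
  induction n with
  | zero => intro s₀; simp [W]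
  | succ m ih =>
    intro s₀
    rw [sum_pi_succ (fun σ => W P π s₀ σ)]
    have h1 : ∀ y : A × S, ∑ σ : Fin m → A × S, W P π s₀ (Fin.cons y σ) = step P π s₀ y := by
      intro y
      simp only [W_cons, ← Finset.mul_sum, ih y.2, mul_one]
    rw [Finset.sum_congr rfl fun y _ => h1 y, Fintype.sum_prod_type]
    simp only [step, ← Finset.mul_sum, hPsum, mul_one, hπsum]



lemma stateDist_shift (ρ : S → ℝ) (P : S → A → S → ℝ) (π : S → A → ℝ) :
    ∀ t : ℕ, stateDist ρ P π (t + 1) = stateDist (stateDist ρ P π 1) P π t := by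
  intro t
  induction t with
  | zero => rfl
  | succ k ih =>
    funext s
    show ∑ s' : S, ∑ a : A, stateDist ρ P π (k+1) s' * π s' a * P s' a s = _
    rw [ih]
    rfl

variable [DecidableEq S] [DecidableEq A]

lemma push_sum (P : S → A → S → ℝ) (π : S → A → ℝ) (ρ G : S → ℝ) :
    ∑ s₀ : S, ∑ y : A × S, (ρ s₀ * step P π s₀ y) * G y.2
    = ∑ s₁ : S, stateDist ρ P π 1 s₁ * G s₁ := by
  have l1 : ∀ s₀ : S, ∑ y : A × S, (ρ s₀ * step P π s₀ y) * G y.2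
      = ∑ s₁ : S, ∑ a' : A, ρ s₀ * π s₀ a' * P s₀ a' s₁ * G s₁ := by
    intro s₀
    rw [Fintype.sum_prod_type, Finset.sum_comm]
    exact Finset.sum_congr rfl fun s₁ _ => Finset.sum_congr rfl fun a' _ => by
      simp only [step]; ring
  rw [Finset.sum_congr rfl fun s₀ _ => l1 s₀, Finset.sum_comm]
  refine Finset.sum_congr rfl fun s₁ _ => ?_
  show _ = (∑ s' : S, ∑ a : A, ρ s' * π s' a * P s' a s₁) * G s₁
  rw [Finset.sum_mul]
  exact Finset.sum_congr rfl fun s' _ => (Finset.sum_mul _ _ _).symm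

lemma marginal (P : S → A → S → ℝ) (π : S → A → ℝ)
    (hPsum : ∀ s a, ∑ s', P s a s' = 1) (hπsum : ∀ s, ∑ a, π s a = 1) :
    ∀ (t n : ℕ) (ht : t < n) (ρ : S → ℝ) (s : S) (a : A),
    ∑ s₀ : S, ∑ σ : Fin n → A × S,
      ρ s₀ * W P π s₀ σ *
        ((if prevState (s₀, σ) ⟨t, ht⟩ = s then 1 else 0) *
         (if (σ ⟨t, ht⟩).1 = a then 1 else 0))
    = stateDist ρ P π t s * π s a := by
  intro t
  induction t with
  | zero =>
    intro n ht ρ s a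
    obtain ⟨m, rfl⟩ : ∃ m, n = m + 1 := ⟨n - 1, by omega⟩
    have hz : (⟨0, ht⟩ : Fin (m+1)) = 0 := rfl
    rw [Finset.sum_congr rfl fun s₀ _ => sum_pi_succ (fun σ => ρ s₀ * W P π s₀ σ *
        ((if prevState (s₀, σ) ⟨0, ht⟩ = s then 1 else 0) *
         (if (σ ⟨0, ht⟩).1 = a then 1 else 0)))]
    have h1 : ∀ (s₀ : S) (y : A × S),
        ∑ σ : Fin m → A × S, ρ s₀ * W P π s₀ (Fin.cons y σ) *
          ((if prevState (s₀, Fin.cons y σ) ⟨0, ht⟩ = s then 1 else 0) *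
           (if ((Fin.cons y σ : Fin (m+1) → A × S) ⟨0, ht⟩).1 = a then 1 else 0))
        = ρ s₀ * step P π s₀ y *
          ((if s₀ = s then 1 else 0) * (if y.1 = a then 1 else 0)) := by
      intro s₀ y
      have : ∀ σ : Fin m → A × S, ρ s₀ * W P π s₀ (Fin.cons y σ) *
          ((if prevState (s₀, Fin.cons y σ) ⟨0, ht⟩ = s then 1 else 0) *
           (if ((Fin.cons y σ : Fin (m+1) → A × S) ⟨0, ht⟩).1 = a then 1 else 0))
          = ρ s₀ * step P π s₀ y *
            ((if s₀ = s then 1 else 0) * (if y.1 = a then 1 else 0)) * W P π y.2 σ := by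
        intro σ
        rw [hz, prevState_zero, Fin.cons_zero, W_cons]
        ring
      rw [Finset.sum_congr rfl fun σ _ => this σ, ← Finset.mul_sum,
        sum_W P π hPsum hπsum, mul_one]
    rw [Finset.sum_congr rfl fun s₀ _ => Finset.sum_congr rfl fun y _ => h1 s₀ y]
    -- now a finite computation
    have h2 : ∀ s₀ : S, ∑ y : A × S, ρ s₀ * step P π s₀ y *
        ((if s₀ = s then 1 else 0) * (if y.1 = a then 1 else 0))
        = (if s₀ = s then 1 else 0) * (ρ s₀ * π s₀ a) := by
      intro s₀
      rw [Fintype.sum_prod_type]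
      simp only [step, mul_ite, ite_mul, mul_one, mul_zero, one_mul, zero_mul,
        Finset.sum_ite_eq', Finset.mem_univ, if_true]
      by_cases hs : s₀ = s <;> simp [hs, ← Finset.mul_sum, hPsum, Finset.sum_ite_eq']
    rw [Finset.sum_congr rfl fun s₀ _ => h2 s₀]
    simp only [ite_mul, one_mul, zero_mul, Finset.sum_ite_eq', Finset.mem_univ, if_true]
    rfl
  | succ k ih =>
    intro n ht ρ s a
    obtain ⟨m, rfl⟩ : ∃ m, n = m + 1 := ⟨n - 1, by omega⟩
    have hk : k < m := by omega
    have hsucc : (⟨k + 1, ht⟩ : Fin (m+1)) = Fin.succ ⟨k, hk⟩ := rfl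
    rw [Finset.sum_congr rfl fun s₀ _ => sum_pi_succ (fun σ => ρ s₀ * W P π s₀ σ *
        ((if prevState (s₀, σ) ⟨k+1, ht⟩ = s then 1 else 0) *
         (if (σ ⟨k+1, ht⟩).1 = a then 1 else 0)))]
    have h1 : ∀ (s₀ : S) (y : A × S),
        (∑ σ : Fin m → A × S, ρ s₀ * W P π s₀ (Fin.cons y σ) *
          ((if prevState (s₀, Fin.cons y σ) ⟨k+1, ht⟩ = s then 1 else 0) *
           (if ((Fin.cons y σ : Fin (m+1) → A × S) ⟨k+1, ht⟩).1 = a then 1 else 0)))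
        = (ρ s₀ * step P π s₀ y) *
          (∑ σ : Fin m → A × S, W P π y.2 σ *
            ((if prevState (y.2, σ) ⟨k, hk⟩ = s then 1 else 0) *
             (if (σ ⟨k, hk⟩).1 = a then 1 else 0))) := by
      intro s₀ y
      rw [Finset.mul_sum]
      refine Finset.sum_congr rfl fun σ _ => ?_
      rw [hsucc, prevState_cons_succ, Fin.cons_succ, W_cons]
      ring
    rw [Finset.sum_congr rfl fun s₀ _ => Finset.sum_congr rfl fun y _ => h1 s₀ y,
      push_sum P π ρ (fun s₁ => ∑ σ : Fin m → A × S, W P π s₁ σ *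
        ((if prevState (s₁, σ) ⟨k, hk⟩ = s then 1 else 0) *
         (if (σ ⟨k, hk⟩).1 = a then 1 else 0))), stateDist_shift ρ P π k, ← ih m hk (stateDist ρ P π 1) s a]
    refine Finset.sum_congr rfl fun s₁ _ => ?_
    rw [Finset.mul_sum]
    exact Finset.sum_congr rfl fun σ _ => by ring


lemma stateDist_nonneg (ρ₀ : S → ℝ) (P : S → A → S → ℝ) (π : S → A → ℝ)
    (hρ : ∀ s, 0 ≤ ρ₀ s) (hP : ∀ s a s', 0 ≤ P s a s') (hπ : ∀ s a, 0 ≤ π s a) :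
    ∀ t s, 0 ≤ stateDist ρ₀ P π t s := by
  intro t
  induction t with
  | zero => exact hρ
  | succ k ih =>
    intro s
    refine Finset.sum_nonneg fun s' _ => Finset.sum_nonneg fun a _ => ?_
    exact mul_nonneg (mul_nonneg (ih s') (hπ s' a)) (hP s' a s)

lemma trajProb_pos (ρ₀ : S → ℝ) (P : S → A → S → ℝ) (π : S → A → ℝ)
    (hρ : ∀ s, 0 < ρ₀ s) (hP : ∀ s a s', 0 < P s a s') (hπ : ∀ s a, 0 < π s a)
    {n : ℕ} (τ : S × (Fin n → A × S)) : 0 < trajProb ρ₀ P π τ := by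
  refine mul_pos (hρ _) (Finset.prod_pos fun t _ => mul_pos (hπ _ _) (hP _ _ _))

end TrajAux

open TrajAux

/-- **Theorem 1 (lower bound).** The f-divergence between trajectory distributions is lower
bounded by the f-divergence between average state-action distributions. -/
theorem traj_fdiv_ge_state_action_fdiv
    {S A : Type*} [Fintype S] [Nonempty S] [Fintype A] [Nonempty A]
    (ρ₀ : S → ℝ) (hρ₀pos : ∀ s, 0 < ρ₀ s) (hρ₀sum : ∑ s, ρ₀ s = 1)
    (P : S → A → S → ℝ) (hPpos : ∀ s a s', 0 < P s a s')
    (hPsum : ∀ s a, ∑ s', P s a s' = 1)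
    (T : ℕ) (hT : 1 ≤ T)
    (π πstar : S → A → ℝ)
    (hπpos : ∀ s a, 0 < π s a) (hπsum : ∀ s, ∑ a, π s a = 1)
    (hπstarpos : ∀ s a, 0 < πstar s a) (hπstarsum : ∀ s, ∑ a, πstar s a = 1)
    (f : ℝ → ℝ) (hf : ConvexOn ℝ (Set.Ici (0 : ℝ)) f) :
    ∑ τ : S × (Fin T → A × S),
        trajProb ρ₀ P π τ * f (trajProb ρ₀ P πstar τ / trajProb ρ₀ P π τ) ≥
      ∑ s : S, ∑ a : A,
        (avgStateDist ρ₀ P π T s * π s a) *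
          f ((avgStateDist ρ₀ P πstar T s * πstar s a) /
              (avgStateDist ρ₀ P π T s * π s a)) := by
  classical
  have hTpos : (0:ℝ) < (T:ℝ) := by exact_mod_cast hT
  -- the randomization kernel
  set K : (S × (Fin T → A × S)) → S → A → ℝ := fun τ s a =>
    (1 / (T:ℝ)) * ∑ t : Fin T,
      ((if prevState τ t = s then (1:ℝ) else 0) * (if (τ.2 t).1 = a then 1 else 0)) with hK
  have hKnn : ∀ τ s a, 0 ≤ K τ s a := by
    intro τ s a
    refine mul_nonneg (by positivity) (Finset.sum_nonneg fun t _ => ?_)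
    refine mul_nonneg ?_ ?_ <;> split_ifs <;> norm_num
  have hK1 : ∀ τ : S × (Fin T → A × S), ∑ s : S, ∑ a : A, K τ s a = 1 := by
    intro τ
    have h1 : ∀ t : Fin T, ∑ s : S, ∑ a : A,
        ((if prevState τ t = s then (1:ℝ) else 0) * (if (τ.2 t).1 = a then 1 else 0)) = 1 := by
      intro t
      simp [← Finset.mul_sum, Finset.sum_ite_eq]
    simp only [hK, ← Finset.mul_sum]
    rw [Finset.sum_congr rfl fun s (_ : s ∈ Finset.univ) => Finset.sum_comm, Finset.sum_comm,
      Finset.sum_congr rfl fun t (_ : t ∈ Finset.univ) => h1 t]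
    simp
    field_simp
  -- marginals
  have hmarg : ∀ (π' : S → A → ℝ), (∀ s', ∑ a', π' s' a' = 1) → ∀ (s : S) (a : A),
      ∑ τ : S × (Fin T → A × S), trajProb ρ₀ P π' τ * K τ s a
      = avgStateDist ρ₀ P π' T s * π' s a := by
    intro π' hπ'sum s a
    have hm : ∀ t : Fin T, ∑ s₀ : S, ∑ σ : Fin T → A × S,
        ρ₀ s₀ * W P π' s₀ σ *
          ((if prevState (s₀, σ) t = s then (1:ℝ) else 0) * (if (σ t).1 = a then 1 else 0))
        = stateDist ρ₀ P π' t s * π' s a := fun t =>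
      marginal P π' hPsum hπ'sum t T t.isLt ρ₀ s a
    have swap : ∑ τ : S × (Fin T → A × S), trajProb ρ₀ P π' τ * K τ s a
        = (1 / (T:ℝ)) * ∑ t : Fin T, ∑ τ : S × (Fin T → A × S), trajProb ρ₀ P π' τ *
            ((if prevState τ t = s then (1:ℝ) else 0) * (if (τ.2 t).1 = a then 1 else 0)) := by
      have e1 : ∀ τ : S × (Fin T → A × S), trajProb ρ₀ P π' τ * K τ s a
          = ∑ t : Fin T, (1/(T:ℝ)) * (trajProb ρ₀ P π' τ *
              ((if prevState τ t = s then (1:ℝ) else 0) * (if (τ.2 t).1 = a then 1 else 0))) := by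
        intro τ
        simp only [hK]
        rw [Finset.mul_sum, Finset.mul_sum]
        exact Finset.sum_congr rfl fun t _ => by ring
      rw [Finset.sum_congr rfl fun τ (_ : τ ∈ Finset.univ) => e1 τ, Finset.sum_comm,
        Finset.mul_sum]
      exact Finset.sum_congr rfl fun t _ => (Finset.mul_sum _ _ _).symm
    rw [swap]
    have hm2 : ∀ t : Fin T, ∑ τ : S × (Fin T → A × S), trajProb ρ₀ P π' τ *
        ((if prevState τ t = s then (1:ℝ) else 0) * (if (τ.2 t).1 = a then 1 else 0))
        = stateDist ρ₀ P π' t s * π' s a := by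
      intro t
      rw [Fintype.sum_prod_type]
      exact hm t
    rw [Finset.sum_congr rfl fun t (_ : t ∈ Finset.univ) => hm2 t, ← Finset.sum_mul,
      Fin.sum_univ_eq_sum_range (fun t => stateDist ρ₀ P π' t s) T]
    simp only [avgStateDist]
    ring
  -- positivity
  have havgpos : ∀ (π' : S → A → ℝ), (∀ s' a', 0 < π' s' a') → ∀ s : S,
      0 < avgStateDist ρ₀ P π' T s := by
    intro π' hπ' s
    refine mul_pos (by positivity) ?_
    refine Finset.sum_pos' (fun t _ => stateDist_nonneg ρ₀ P π' (fun s' => (hρ₀pos s').le)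
      (fun s' a' s'' => (hPpos s' a' s'').le) (fun s' a' => (hπ' s' a').le) t s)
      ⟨0, Finset.mem_range.2 hT, hρ₀pos s⟩
  have hπtraj : ∀ τ : S × (Fin T → A × S), 0 < trajProb ρ₀ P π τ :=
    fun τ => trajProb_pos ρ₀ P π hρ₀pos hPpos hπpos τ
  have hπstraj : ∀ τ : S × (Fin T → A × S), 0 < trajProb ρ₀ P πstar τ :=
    fun τ => trajProb_pos ρ₀ P πstar hρ₀pos hPpos hπstarpos τ
  have hqpos : ∀ (s : S) (a : A), 0 < avgStateDist ρ₀ P π T s * π s a :=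
    fun s a => mul_pos (havgpos π hπpos s) (hπpos s a)
  -- Jensen per (s, a)
  have key : ∀ (s : S) (a : A),
      (avgStateDist ρ₀ P π T s * π s a) *
        f ((avgStateDist ρ₀ P πstar T s * πstar s a) / (avgStateDist ρ₀ P π T s * π s a))
      ≤ ∑ τ : S × (Fin T → A × S), trajProb ρ₀ P π τ * K τ s a *
          f (trajProb ρ₀ P πstar τ / trajProb ρ₀ P π τ) := by
    intro s a
    set q := avgStateDist ρ₀ P π T s * π s a with hqd
    have hq : 0 < q := hqpos s a
    have hw1 : ∑ τ : S × (Fin T → A × S), trajProb ρ₀ P π τ * K τ s a / q = 1 := by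
      rw [← Finset.sum_div, hmarg π hπsum s a, ← hqd, div_self hq.ne']
    have hx : ∑ τ : S × (Fin T → A × S), (trajProb ρ₀ P π τ * K τ s a / q) •
        (trajProb ρ₀ P πstar τ / trajProb ρ₀ P π τ)
        = (avgStateDist ρ₀ P πstar T s * πstar s a) / q := by
      rw [← hmarg πstar hπstarsum s a, Finset.sum_div]
      refine Finset.sum_congr rfl fun τ _ => ?_
      rw [smul_eq_mul]
      have h0 := (hπtraj τ).ne'
      field_simp
    have hj := hf.map_sum_le (t := Finset.univ)
      (w := fun τ => trajProb ρ₀ P π τ * K τ s a / q)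
      (p := fun τ => trajProb ρ₀ P πstar τ / trajProb ρ₀ P π τ)
      (fun τ _ => div_nonneg (mul_nonneg (hπtraj τ).le (hKnn τ s a)) hq.le) hw1
      (fun τ _ => Set.mem_Ici.2 (div_nonneg (hπstraj τ).le (hπtraj τ).le))
    rw [hx] at hj
    calc q * f ((avgStateDist ρ₀ P πstar T s * πstar s a) / q)
        ≤ q * ∑ τ : S × (Fin T → A × S), (trajProb ρ₀ P π τ * K τ s a / q) •
            f (trajProb ρ₀ P πstar τ / trajProb ρ₀ P π τ) :=
          mul_le_mul_of_nonneg_left hj hq.le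
      _ = ∑ τ : S × (Fin T → A × S), trajProb ρ₀ P π τ * K τ s a *
            f (trajProb ρ₀ P πstar τ / trajProb ρ₀ P π τ) := by
          rw [Finset.mul_sum]
          refine Finset.sum_congr rfl fun τ _ => ?_
          rw [smul_eq_mul]
          field_simp
  -- assemble
  rw [ge_iff_le]
  calc ∑ s : S, ∑ a : A,
        (avgStateDist ρ₀ P π T s * π s a) *
          f ((avgStateDist ρ₀ P πstar T s * πstar s a) /
              (avgStateDist ρ₀ P π T s * π s a))
      ≤ ∑ s : S, ∑ a : A, ∑ τ : S × (Fin T → A × S), trajProb ρ₀ P π τ * K τ s a *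
          f (trajProb ρ₀ P πstar τ / trajProb ρ₀ P π τ) :=
        Finset.sum_le_sum fun s _ => Finset.sum_le_sum fun a _ => key s a
    _ = ∑ τ : S × (Fin T → A × S), ∑ s : S, ∑ a : A, trajProb ρ₀ P π τ * K τ s a *
          f (trajProb ρ₀ P πstar τ / trajProb ρ₀ P π τ) := by
        rw [Finset.sum_congr rfl fun s (_ : s ∈ Finset.univ) => Finset.sum_comm, Finset.sum_comm]
    _ = ∑ τ : S × (Fin T → A × S),
          trajProb ρ₀ P π τ * f (trajProb ρ₀ P πstar τ / trajProb ρ₀ P π τ) := by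
        refine Finset.sum_congr rfl fun τ _ => ?_
        have : ∀ (s : S) (a : A), trajProb ρ₀ P π τ * K τ s a *
            f (trajProb ρ₀ P πstar τ / trajProb ρ₀ P π τ)
            = (trajProb ρ₀ P π τ * f (trajProb ρ₀ P πstar τ / trajProb ρ₀ P π τ)) * K τ s a :=
          fun s a => by ring
        rw [Finset.sum_congr rfl fun s (_ : s ∈ Finset.univ) =>
          Finset.sum_congr rfl fun a (_ : a ∈ Finset.univ) => this s a]
        rw [Finset.sum_congr rfl fun s (_ : s ∈ Finset.univ) => (Finset.mul_sum _ _ _).symm,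
          ← Finset.mul_sum, hK1 τ, mul_one]


end
end

section
/- In a finite-horizon MDP, let π and π* be stochastic policies, and assume ρ₀(s) > 0, P(s'|s,a) > 0, π(a|s) > 0 and π*(a|s) > 0 for all s, s' ∈ S, a ∈ A. Then for every function f : ℝ → ℝ convex on [0,∞), the f-divergence between trajectory distributions is lower bounded by the f-divergence between average state distributions: ∑_τ ρ_π(τ)·f(ρ_{π*}(τ)/ρ_π(τ)) ≥ ∑_{s∈S} ρ_π(s)·f(ρ_{π*}(s)/ρ_π(s)). -/
noncomputable section

/-!
Let `t` be uniform on `{0, …, T-1}` and independent of the trajectory `τ ~ ρ_π`. The pair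
`(t, τ)` is distributed by `ρ_π(τ)/T`, and its image under `(t, τ) ↦ s_t` is the average state
distribution `ρ_π(s)`. Since the factor `1/T` cancels in the ratios, the f-divergence between
these joint laws for `π*` and `π` is the trajectory f-divergence. The data-processing inequality
for f-divergences, which on finite sets is Jensen's inequality on each fibre of the map,
gives the bound.
-/

open Finset

def fDiv {X : Type*} [Fintype X] (f : ℝ → ℝ) (p q : X → ℝ) : ℝ :=
  ∑ x, q x * f (p x / q x)

def pushforward {X Y : Type*} [Fintype X] [DecidableEq Y] (g : X → Y) (q : X → ℝ) (y : Y) : ℝ :=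
  ∑ x with g x = y, q x

theorem ConvexOn.sum_mul_map_sum_div_sum_le {ι : Type*} {f : ℝ → ℝ}
    (hf : ConvexOn ℝ (Set.Ici 0) f) {t : Finset ι} {p q : ι → ℝ}
    (hq : ∀ i ∈ t, 0 < q i) (hp : ∀ i ∈ t, 0 ≤ p i) :
    (∑ i ∈ t, q i) * f ((∑ i ∈ t, p i) / ∑ i ∈ t, q i) ≤ ∑ i ∈ t, q i * f (p i / q i) := by
  rcases t.eq_empty_or_nonempty with rfl | ht
  · simp
  have hQ : 0 < ∑ i ∈ t, q i := sum_pos hq ht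
  have jensen := hf.map_centerMass_le (fun i hi => (hq i hi).le) hQ
    (p := fun i => p i / q i) fun i hi => div_nonneg (hp i hi) (hq i hi).le
  have hcenter : t.centerMass q (fun i => p i / q i) = (∑ i ∈ t, p i) / ∑ i ∈ t, q i := by
    rw [centerMass, smul_eq_mul, inv_mul_eq_div]
    congr 1
    exact sum_congr rfl fun i hi => by rw [smul_eq_mul, mul_div_cancel₀ _ (hq i hi).ne']
  rw [hcenter, centerMass, smul_eq_mul, le_inv_mul_iff₀ hQ] at jensen
  simpa only [Function.comp, smul_eq_mul] using jensen

theorem fDiv_pushforward_le {X Y : Type*} [Fintype X] [Fintype Y] [DecidableEq Y] {f : ℝ → ℝ}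
    (hf : ConvexOn ℝ (Set.Ici 0) f) (g : X → Y) {p q : X → ℝ}
    (hq : ∀ x, 0 < q x) (hp : ∀ x, 0 ≤ p x) :
    fDiv f (pushforward g p) (pushforward g q) ≤ fDiv f p q := by
  rw [fDiv, fDiv, ← sum_fiberwise univ g]
  exact sum_le_sum fun y _ => hf.sum_mul_map_sum_div_sum_le (fun x _ => hq x) fun x _ => hp x

theorem fDiv_weight_mul {ι X : Type*} [Fintype ι] [Fintype X] (f : ℝ → ℝ) (w : ι → ℝ)
    (p q : X → ℝ) :
    fDiv f (fun x : ι × X => w x.1 * p x.2) (fun x => w x.1 * q x.2) =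
      (∑ i, w i) * fDiv f p q := by
  rw [fDiv, fDiv, Fintype.sum_prod_type, sum_mul]
  refine sum_congr rfl fun i _ => ?_
  rw [mul_sum]
  refine sum_congr rfl fun x _ => ?_
  rcases eq_or_ne (w i) 0 with hw | hw
  · simp [hw]
  · rw [mul_div_mul_left _ _ hw, mul_assoc]

section Trajectory

variable {S A : Type*}

def trajState {T : ℕ} (τ : S × (Fin T → A × S)) : ℕ → S
  | 0 => τ.1
  | t + 1 => if h : t < T then (τ.2 ⟨t, h⟩).2 else τ.1

theorem prevState_eq_trajState {T : ℕ} (τ : S × (Fin T → A × S)) (t : Fin T) :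
    prevState τ t = trajState τ t := by
  obtain ⟨_ | t, ht⟩ := t
  · rfl
  · simp [prevState, trajState, Nat.lt_of_succ_lt ht]

theorem trajState_snoc {T t : ℕ} (τ : S × (Fin T → A × S)) (x : A × S) (ht : t ≤ T) :
    trajState (T := T + 1) (τ.1, Fin.snoc τ.2 x) t = trajState τ t := by
  cases t with
  | zero => rfl
  | succ t =>
    have ht' : t < T := ht
    simp [trajState, ht', Nat.lt_succ_of_lt ht', Fin.snoc]

theorem trajState_snoc_last {T : ℕ} (τ : S × (Fin T → A × S)) (x : A × S) :
    trajState (T := T + 1) (τ.1, Fin.snoc τ.2 x) (T + 1) = x.2 := by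
  simp [trajState, Fin.snoc]

theorem trajProb_snoc (ρ₀ : S → ℝ) (P : S → A → S → ℝ) (π : S → A → ℝ) {T : ℕ}
    (τ : S × (Fin T → A × S)) (x : A × S) :
    trajProb (T := T + 1) ρ₀ P π (τ.1, Fin.snoc τ.2 x) =
      trajProb ρ₀ P π τ * (π (trajState τ T) x.1 * P (trajState τ T) x.1 x.2) := by
  simp only [trajProb, Fin.prod_univ_castSucc, prevState_eq_trajState, Fin.val_castSucc,
    Fin.val_last, Fin.snoc_castSucc, Fin.snoc_last, mul_assoc]
  congr 2
  · exact prod_congr rfl fun i _ => by rw [trajState_snoc τ x i.isLt.le]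
  · rw [trajState_snoc τ x le_rfl]

theorem trajProb_pos {ρ₀ : S → ℝ} {P : S → A → S → ℝ} {π : S → A → ℝ} (hρ₀ : ∀ s, 0 < ρ₀ s)
    (hP : ∀ s a s', 0 < P s a s') (hπ : ∀ s a, 0 < π s a) {T : ℕ} (τ : S × (Fin T → A × S)) :
    0 < trajProb ρ₀ P π τ :=
  mul_pos (hρ₀ _) (prod_pos fun _ _ => mul_pos (hπ _ _) (hP _ _ _))

variable [Fintype S] [Fintype A] (ρ₀ : S → ℝ) (P : S → A → S → ℝ) (π : S → A → ℝ)

theorem sum_traj_succ {T : ℕ} (F : S × (Fin (T + 1) → A × S) → ℝ) :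
    ∑ τ, F τ = ∑ τ : S × (Fin T → A × S), ∑ x : A × S, F (τ.1, Fin.snoc τ.2 x) := by
  rw [Fintype.sum_prod_type, Fintype.sum_prod_type]
  refine sum_congr rfl fun s₀ _ => ?_
  rw [← (Fin.snocEquiv fun _ => A × S).sum_comp, Fintype.sum_prod_type, sum_comm]
  rfl

theorem sum_stateDist_succ_mul (t : ℕ) (h : S → ℝ) :
    ∑ s, stateDist ρ₀ P π (t + 1) s * h s =
      ∑ s, stateDist ρ₀ P π t s * ∑ x : A × S, π s x.1 * P s x.1 x.2 * h x.2 := by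
  simp only [stateDist, sum_mul, mul_sum, Fintype.sum_prod_type]
  rw [sum_comm]
  refine sum_congr rfl fun s _ => ?_
  rw [sum_comm]
  exact sum_congr rfl fun a _ => sum_congr rfl fun s' _ => by ring

theorem sum_trajProb_mul_trajState (hPsum : ∀ s a, ∑ s', P s a s' = 1)
    (hπsum : ∀ s, ∑ a, π s a = 1) (h : S → ℝ) {T t : ℕ} (ht : t ≤ T) :
    ∑ τ : S × (Fin T → A × S), trajProb ρ₀ P π τ * h (trajState τ t) =
      ∑ s, stateDist ρ₀ P π t s * h s := by
  induction T generalizing t h with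
  | zero =>
    obtain rfl : t = 0 := Nat.le_zero.mp ht
    simp [Fintype.sum_prod_type, trajProb, trajState, stateDist]
  | succ T ih =>
    simp only [sum_traj_succ, trajProb_snoc]
    rcases Nat.lt_or_eq_of_le ht with ht | rfl
    · have hstep : ∀ s, ∑ x : A × S, π s x.1 * P s x.1 x.2 = 1 := fun s => by
        simp [Fintype.sum_prod_type, ← mul_sum, hPsum, hπsum]
      simp only [trajState_snoc _ _ (Nat.le_of_lt_succ ht), mul_right_comm _ _ (h _), ← mul_sum,
        hstep, mul_one]
      exact ih h (Nat.le_of_lt_succ ht)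
    · rw [sum_stateDist_succ_mul, ← ih _ le_rfl]
      simp only [trajState_snoc_last, mul_assoc, ← mul_sum]

theorem pushforward_trajState [DecidableEq S] (hPsum : ∀ s a, ∑ s', P s a s' = 1)
    (hπsum : ∀ s, ∑ a, π s a = 1) {T t : ℕ} (ht : t ≤ T) :
    pushforward (fun τ : S × (Fin T → A × S) => trajState τ t) (trajProb ρ₀ P π) =
      stateDist ρ₀ P π t := by
  ext s
  simpa [pushforward, sum_filter] using
    sum_trajProb_mul_trajState ρ₀ P π hPsum hπsum (fun s' => if s' = s then 1 else 0) ht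

theorem pushforward_prevState_occupancy [DecidableEq S] (hPsum : ∀ s a, ∑ s', P s a s' = 1)
    (hπsum : ∀ s, ∑ a, π s a = 1) (T : ℕ) :
    pushforward (fun x : Fin T × (S × (Fin T → A × S)) => prevState x.2 x.1)
        (fun x => 1 / (T : ℝ) * trajProb ρ₀ P π x.2) =
      avgStateDist ρ₀ P π T := by
  ext s
  rw [avgStateDist, ← Fin.sum_univ_eq_sum_range, mul_sum]
  simp only [pushforward, sum_filter, prevState_eq_trajState]
  rw [Fintype.sum_prod_type]
  refine sum_congr rfl fun t _ => ?_
  rw [← pushforward_trajState ρ₀ P π hPsum hπsum t.isLt.le, pushforward, sum_filter, mul_sum]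
  simp only [mul_ite, mul_zero]

end Trajectory

theorem traj_fdiv_ge_state_fdiv_general
    {S A : Type*} [Fintype S] [Fintype A]
    (ρ₀ : S → ℝ) (hρ₀pos : ∀ s, 0 < ρ₀ s)
    (P : S → A → S → ℝ) (hPpos : ∀ s a s', 0 < P s a s')
    (hPsum : ∀ s a, ∑ s', P s a s' = 1)
    (T : ℕ) (hT : 1 ≤ T)
    (π πstar : S → A → ℝ)
    (hπpos : ∀ s a, 0 < π s a) (hπsum : ∀ s, ∑ a, π s a = 1)
    (hπstarpos : ∀ s a, 0 < πstar s a) (hπstarsum : ∀ s, ∑ a, πstar s a = 1)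
    (f : ℝ → ℝ) (hf : ConvexOn ℝ (Set.Ici (0 : ℝ)) f) :
    ∑ τ : S × (Fin T → A × S),
        trajProb ρ₀ P π τ * f (trajProb ρ₀ P πstar τ / trajProb ρ₀ P π τ) ≥
      ∑ s : S, avgStateDist ρ₀ P π T s *
        f (avgStateDist ρ₀ P πstar T s / avgStateDist ρ₀ P π T s) := by
  classical
  have hTpos : (0 : ℝ) < T := by exact_mod_cast hT
  let g (x : Fin T × (S × (Fin T → A × S))) : S := prevState x.2 x.1
  let occupancy (π' : S → A → ℝ) (x : Fin T × (S × (Fin T → A × S))) : ℝ :=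
    1 / (T : ℝ) * trajProb ρ₀ P π' x.2
  calc ∑ s : S, avgStateDist ρ₀ P π T s *
        f (avgStateDist ρ₀ P πstar T s / avgStateDist ρ₀ P π T s)
      = fDiv f (pushforward g (occupancy πstar)) (pushforward g (occupancy π)) := by
        rw [pushforward_prevState_occupancy ρ₀ P π hPsum hπsum,
          pushforward_prevState_occupancy ρ₀ P πstar hPsum hπstarsum, fDiv]
    _ ≤ fDiv f (occupancy πstar) (occupancy π) :=
        fDiv_pushforward_le hf g
          (fun x => mul_pos (by positivity) (trajProb_pos hρ₀pos hPpos hπpos x.2))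
          (fun x => mul_nonneg (by positivity) (trajProb_pos hρ₀pos hPpos hπstarpos x.2).le)
    _ = fDiv f (trajProb ρ₀ P πstar) (trajProb ρ₀ P π) := by
        refine (fDiv_weight_mul f (fun _ : Fin T => 1 / (T : ℝ)) _ _).trans ?_
        rw [sum_const, card_univ, Fintype.card_fin, nsmul_eq_mul, mul_one_div_cancel hTpos.ne',
          one_mul]

/-- **Corollary.** The f-divergence between trajectory distributions is lower bounded by
the f-divergence between average state distributions. -/
theorem traj_fdiv_ge_state_fdiv
    {S A : Type*} [Fintype S] [Nonempty S] [Fintype A] [Nonempty A]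
    (ρ₀ : S → ℝ) (hρ₀pos : ∀ s, 0 < ρ₀ s) (hρ₀sum : ∑ s, ρ₀ s = 1)
    (P : S → A → S → ℝ) (hPpos : ∀ s a s', 0 < P s a s')
    (hPsum : ∀ s a, ∑ s', P s a s' = 1)
    (T : ℕ) (hT : 1 ≤ T)
    (π πstar : S → A → ℝ)
    (hπpos : ∀ s a, 0 < π s a) (hπsum : ∀ s, ∑ a, π s a = 1)
    (hπstarpos : ∀ s a, 0 < πstar s a) (hπstarsum : ∀ s, ∑ a, πstar s a = 1)
    (f : ℝ → ℝ) (hf : ConvexOn ℝ (Set.Ici (0 : ℝ)) f) :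
    ∑ τ : S × (Fin T → A × S),
        trajProb ρ₀ P π τ * f (trajProb ρ₀ P πstar τ / trajProb ρ₀ P π τ) ≥
      ∑ s : S, avgStateDist ρ₀ P π T s *
        f (avgStateDist ρ₀ P πstar T s / avgStateDist ρ₀ P π T s) :=
  traj_fdiv_ge_state_fdiv_general ρ₀ hρ₀pos P hPpos hPsum T hT π πstar hπpos hπsum hπstarpos
    hπstarsum f hf
end
end

section
/- In a finite-horizon MDP, let π and π* be stochastic policies with ρ₀(s) > 0, P(s'|s,a) > 0, π(a|s) > 0 and π*(a|s) > 0 for all s, s', a. Then the total variation distance between trajectory distributions satisfies the chain of inequalities TV(ρ_{π*}(τ), ρ_π(τ)) ≤ T · ∑_{s∈S} ρ_π(s) · TV(π*(·|s), π(·|s)) ≤ T · √( ∑_{s∈S} ρ_π(s) · KL(π*(·|s)‖π(·|s)) ). -/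
noncomputable section

section AuxPolicy

def gProb {S A : Type*} [Fintype S] [Fintype A] (ρ₀ : S → ℝ) (K : ℕ → S → A × S → ℝ)
    (T : ℕ) (τ : S × (Fin T → A × S)) : ℝ :=
  ρ₀ τ.1 * ∏ t : Fin T, K t (prevState τ t) (τ.2 t)

def lastState {S A : Type*} {T : ℕ} (τ : S × (Fin T → A × S)) : S :=
  if _h : T = 0 then τ.1 else (τ.2 ⟨T - 1, by omega⟩).2

def Wdist {S A : Type*} [Fintype S] [Fintype A] (ρ₀ : S → ℝ)
    (K : ℕ → S → A × S → ℝ) : ℕ → S → ℝ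
  | 0 => ρ₀
  | t + 1 => fun s => ∑ s' : S, ∑ a : A, Wdist ρ₀ K t s' * K t s' (a, s)

lemma prevState_snoc_castSucc {S A : Type*} {T : ℕ} (s₀ : S) (p : Fin T → A × S)
    (x : A × S) (t : Fin T) :
    prevState (s₀, Fin.snoc p x) t.castSucc = prevState (s₀, p) t := by
  unfold prevState
  simp only [Fin.coe_castSucc]
  by_cases h : (t : ℕ) = 0
  · simp [h]
  · rw [dif_neg h, dif_neg h]
    have h1 : ((t : ℕ) - 1) < T := lt_of_le_of_lt (Nat.pred_le _) t.isLt
    have : (⟨(t : ℕ) - 1, lt_of_le_of_lt (Nat.pred_le _) t.castSucc.isLt⟩ : Fin (T+1))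
        = Fin.castSucc ⟨(t : ℕ) - 1, h1⟩ := rfl
    rw [this, Fin.snoc_castSucc]

lemma prevState_snoc_last {S A : Type*} {T : ℕ} (s₀ : S) (p : Fin T → A × S) (x : A × S) :
    prevState (s₀, Fin.snoc p x) (Fin.last T) = lastState (s₀, p) := by
  unfold prevState lastState
  simp only [Fin.val_last]
  by_cases h : T = 0
  · simp [h]
  · rw [dif_neg h, dif_neg h]
    have h1 : T - 1 < T := by omega
    have : (⟨T - 1, by omega⟩ : Fin (T+1)) = Fin.castSucc ⟨T - 1, h1⟩ := rfl
    rw [this, Fin.snoc_castSucc]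

lemma lastState_snoc {S A : Type*} {T : ℕ} (s₀ : S) (p : Fin T → A × S) (x : A × S) :
    lastState (s₀, Fin.snoc p x) = x.2 := by
  unfold lastState
  rw [dif_neg (Nat.succ_ne_zero T)]
  have : (⟨T + 1 - 1, by omega⟩ : Fin (T+1)) = Fin.last T := rfl
  rw [this]
  simp

lemma sum_gProb {S A : Type*} [Fintype S] [Fintype A] (ρ₀ : S → ℝ)
    (K : ℕ → S → A × S → ℝ) (T : ℕ) (f : S → ℝ) :
    ∑ τ : S × (Fin T → A × S), gProb ρ₀ K T τ * f (lastState τ) =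
      ∑ s : S, Wdist ρ₀ K T s * f s := by
  induction T generalizing f with
  | zero =>
      rw [Fintype.sum_prod_type]
      simp [gProb, lastState, Wdist]
  | succ T ih =>
      rw [Fintype.sum_prod_type]
      have key : ∀ s₀ : S, ∑ g : Fin (T+1) → A × S,
          gProb ρ₀ K (T+1) (s₀, g) * f (lastState (s₀, g)) =
          ∑ q : (A × S) × (Fin T → A × S),
            gProb ρ₀ K (T+1) (s₀, Fin.snoc q.2 q.1) * f (lastState (s₀, Fin.snoc q.2 q.1)) := by
        intro s₀
        exact (Fintype.sum_equiv (Fin.snocEquiv (fun _ => A × S)) _ _ (fun q => rfl)).symm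
      simp only [key]
      have expand : ∀ (s₀ : S) (q : (A × S) × (Fin T → A × S)),
          gProb ρ₀ K (T+1) (s₀, Fin.snoc q.2 q.1) * f (lastState (s₀, Fin.snoc q.2 q.1)) =
          gProb ρ₀ K T (s₀, q.2) *
            (K T (lastState (s₀, q.2)) q.1 * f q.1.2) := by
        intro s₀ q
        rw [lastState_snoc]
        unfold gProb
        rw [Fin.prod_univ_castSucc]
        simp only [Fin.snoc_castSucc, Fin.snoc_last, prevState_snoc_castSucc,
          prevState_snoc_last, Fin.val_last, Fin.coe_castSucc]
        ring
      simp only [expand]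
      have step : ∀ s₀ : S, ∑ q : (A × S) × (Fin T → A × S),
          gProb ρ₀ K T (s₀, q.2) * (K T (lastState (s₀, q.2)) q.1 * f q.1.2) =
          ∑ p : Fin T → A × S, gProb ρ₀ K T (s₀, p) *
            ∑ x : A × S, K T (lastState (s₀, p)) x * f x.2 := by
        intro s₀
        rw [Fintype.sum_prod_type, Finset.sum_comm]
        simp [Finset.mul_sum]
      simp only [step]
      have ih' := ih (fun s => ∑ x : A × S, K T s x * f x.2)
      rw [Fintype.sum_prod_type] at ih'
      refine Eq.trans (Finset.sum_congr rfl fun s₀ _ => Finset.sum_congr rfl fun p _ => rfl)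
        (ih'.trans ?_)
      show ∑ s' : S, Wdist ρ₀ K T s' * ∑ x : A × S, K T s' x * f x.2
          = ∑ s : S, (∑ s' : S, ∑ a : A, Wdist ρ₀ K T s' * K T s' (a, s)) * f s
      simp only [Fintype.sum_prod_type, Finset.mul_sum, Finset.sum_mul, mul_assoc]
      calc ∑ s' : S, ∑ a : A, ∑ s : S, Wdist ρ₀ K T s' * (K T s' (a, s) * f s)
          = ∑ s' : S, ∑ s : S, ∑ a : A, Wdist ρ₀ K T s' * (K T s' (a, s) * f s) :=
            Finset.sum_congr rfl fun _ _ => Finset.sum_comm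
        _ = ∑ s : S, ∑ s' : S, ∑ a : A, Wdist ρ₀ K T s' * (K T s' (a, s) * f s) :=
            Finset.sum_comm

section MDP

variable {S A : Type*} [Fintype S] [Fintype A]

lemma Wdist_eq_stateDist (ρ₀ : S → ℝ) (P : S → A → S → ℝ) (π : S → A → ℝ)
    (K : ℕ → S → A × S → ℝ) (m : ℕ)
    (hK : ∀ t < m, ∀ s p, K t s p = π s p.1 * P s p.1 p.2) :
    ∀ t ≤ m, Wdist ρ₀ K t = stateDist ρ₀ P π t := by
  intro t
  induction t with
  | zero => intro _; rfl
  | succ t ih =>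
      intro ht
      have ht' : t < m := ht
      funext s
      show ∑ s' : S, ∑ a : A, Wdist ρ₀ K t s' * K t s' (a, s) = _
      rw [ih (le_of_lt ht')]
      show _ = ∑ s' : S, ∑ a : A, stateDist ρ₀ P π t s' * π s' a * P s' a s
      refine Finset.sum_congr rfl fun s' _ => Finset.sum_congr rfl fun a _ => ?_
      rw [hK t ht']
      ring

lemma sum_Wdist_const (ρ₀ : S → ℝ) (K : ℕ → S → A × S → ℝ) (m : ℕ)
    (hK : ∀ t, m ≤ t → ∀ s, ∑ p : A × S, K t s p = 1) :
    ∀ T, m ≤ T → ∑ s, Wdist ρ₀ K T s = ∑ s, Wdist ρ₀ K m s := by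
  intro T
  induction T with
  | zero => intro h; rw [Nat.le_zero.mp h]
  | succ T ih =>
      intro h
      rcases Nat.lt_or_ge m (T + 1) with h' | h'
      · have hm : m ≤ T := Nat.lt_succ_iff.mp h'
        rw [← ih hm]
        show ∑ s : S, ∑ s' : S, ∑ a : A, Wdist ρ₀ K T s' * K T s' (a, s) = _
        rw [Finset.sum_comm]
        refine Finset.sum_congr rfl fun s' _ => ?_
        have : ∑ s : S, ∑ a : A, Wdist ρ₀ K T s' * K T s' (a, s)
            = Wdist ρ₀ K T s' * ∑ p : A × S, K T s' p := by
          rw [Fintype.sum_prod_type, Finset.mul_sum, Finset.sum_comm]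
          exact Finset.sum_congr rfl fun a _ => by rw [Finset.mul_sum]
        rw [this, hK T hm s', mul_one]
      · have : m = T + 1 := le_antisymm h h'
        rw [this]

variable (π πstar : S → A → ℝ) (P : S → A → S → ℝ)

def KmixK (j : ℕ) : ℕ → S → A × S → ℝ :=
  fun t s p => (if t < j then π s p.1 else πstar s p.1) * P s p.1 p.2

def KdK (k : ℕ) : ℕ → S → A × S → ℝ :=
  fun t s p =>
    (if t < k then π s p.1 else if t = k then |πstar s p.1 - π s p.1| else πstar s p.1) *
      P s p.1 p.2

variable {π πstar P}

lemma abs_gProb_diff (ρ₀ : S → ℝ) (hρ : ∀ s, 0 ≤ ρ₀ s) (hP : ∀ s a s', 0 ≤ P s a s')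
    (hπ : ∀ s a, 0 ≤ π s a) (hπs : ∀ s a, 0 ≤ πstar s a)
    {T k : ℕ} (hk : k < T) (τ : S × (Fin T → A × S)) :
    |gProb ρ₀ (KmixK π πstar P (k+1)) T τ - gProb ρ₀ (KmixK π πstar P k) T τ|
      = gProb ρ₀ (KdK π πstar P k) T τ := by
  have hsplit : ∀ K : ℕ → S → A × S → ℝ,
      gProb ρ₀ K T τ = ρ₀ τ.1 * (K ((⟨k, hk⟩ : Fin T) : ℕ)
          (prevState τ ⟨k, hk⟩) (τ.2 ⟨k, hk⟩) *
        ∏ t ∈ Finset.univ.erase (⟨k, hk⟩ : Fin T), K t (prevState τ t) (τ.2 t)) := by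
    intro K
    rw [gProb, ← Finset.mul_prod_erase Finset.univ _ (Finset.mem_univ (⟨k, hk⟩ : Fin T))]
  rw [hsplit, hsplit, hsplit]
  have hval : (((⟨k, hk⟩ : Fin T)) : ℕ) = k := rfl
  rw [hval]
  have hne : ∀ t : Fin T, t ∈ Finset.univ.erase (⟨k, hk⟩ : Fin T) → (t : ℕ) ≠ k := by
    intro t ht h
    exact (Finset.mem_erase.1 ht).1 (Fin.ext h)
  have h1 : ∏ t ∈ Finset.univ.erase (⟨k, hk⟩ : Fin T),
        KmixK π πstar P (k+1) t (prevState τ t) (τ.2 t)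
      = ∏ t ∈ Finset.univ.erase (⟨k, hk⟩ : Fin T),
        KmixK π πstar P k t (prevState τ t) (τ.2 t) := by
    refine Finset.prod_congr rfl fun t ht => ?_
    have h := hne t ht
    unfold KmixK
    rcases Nat.lt_or_ge (t : ℕ) k with h' | h'
    · rw [if_pos h', if_pos (by omega)]
    · rw [if_neg (by omega), if_neg (by omega)]
  have h2 : ∏ t ∈ Finset.univ.erase (⟨k, hk⟩ : Fin T),
        KdK π πstar P k t (prevState τ t) (τ.2 t)
      = ∏ t ∈ Finset.univ.erase (⟨k, hk⟩ : Fin T),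
        KmixK π πstar P k t (prevState τ t) (τ.2 t) := by
    refine Finset.prod_congr rfl fun t ht => ?_
    have h := hne t ht
    unfold KdK KmixK
    rcases Nat.lt_or_ge (t : ℕ) k with h' | h'
    · rw [if_pos h', if_pos h']
    · rw [if_neg (by omega), if_neg h, if_neg (by omega)]
  rw [h1, h2]
  have hCnn : 0 ≤ ∏ t ∈ Finset.univ.erase (⟨k, hk⟩ : Fin T),
      KmixK π πstar P k t (prevState τ t) (τ.2 t) := by
    refine Finset.prod_nonneg fun t _ => ?_
    unfold KmixK
    refine mul_nonneg ?_ (hP _ _ _)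
    split
    · exact hπ _ _
    · exact hπs _ _
  set C := ∏ t ∈ Finset.univ.erase (⟨k, hk⟩ : Fin T),
      KmixK π πstar P k t (prevState τ t) (τ.2 t) with hCdef
  set q := prevState τ ⟨k, hk⟩
  set a := (τ.2 ⟨k, hk⟩).1
  set s' := (τ.2 ⟨k, hk⟩).2
  have e1 : KmixK π πstar P (k+1) k q (a, s') = π q a * P q a s' := by
    unfold KmixK; rw [if_pos (Nat.lt_succ_self k)]
  have e2 : KmixK π πstar P k k q (a, s') = πstar q a * P q a s' := by
    unfold KmixK; rw [if_neg (lt_irrefl k)]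
  have e3 : KdK π πstar P k k q (a, s') = |πstar q a - π q a| * P q a s' := by
    unfold KdK; rw [if_neg (lt_irrefl k), if_pos rfl]
  have hpair : τ.2 ⟨k, hk⟩ = (a, s') := rfl
  rw [hpair, e1, e2, e3]
  have key : ρ₀ τ.1 * (π q a * P q a s' * C) - ρ₀ τ.1 * (πstar q a * P q a s' * C)
      = (π q a - πstar q a) * (ρ₀ τ.1 * (P q a s' * C)) := by ring
  rw [key, abs_mul, abs_of_nonneg (mul_nonneg (hρ _) (mul_nonneg (hP _ _ _) hCnn)),
    abs_sub_comm]
  ring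

end MDP


lemma part1 {S A : Type*} [Fintype S] [Fintype A]
    (ρ₀ : S → ℝ) (hρ : ∀ s, 0 ≤ ρ₀ s)
    (P : S → A → S → ℝ) (hP : ∀ s a s', 0 ≤ P s a s') (hPsum : ∀ s a, ∑ s', P s a s' = 1)
    (π πstar : S → A → ℝ)
    (hπ : ∀ s a, 0 ≤ π s a)
    (hπs : ∀ s a, 0 ≤ πstar s a) (hπssum : ∀ s, ∑ a, πstar s a = 1)
    (T : ℕ) (hT : 1 ≤ T) :
    (1 / 2) * (∑ τ : S × (Fin T → A × S),
        |trajProb ρ₀ P πstar τ - trajProb ρ₀ P π τ|) ≤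
      (T : ℝ) * ∑ s : S, avgStateDist ρ₀ P π T s *
        ((1 / 2) * ∑ a : A, |πstar s a - π s a|) := by
  have hid0 : ∀ τ : S × (Fin T → A × S),
      trajProb ρ₀ P πstar τ = gProb ρ₀ (KmixK π πstar P 0) T τ := by
    intro τ
    unfold trajProb gProb KmixK
    refine congrArg _ (Finset.prod_congr rfl fun t _ => ?_)
    rw [if_neg (Nat.not_lt_zero _)]
  have hidT : ∀ τ : S × (Fin T → A × S),
      trajProb ρ₀ P π τ = gProb ρ₀ (KmixK π πstar P T) T τ := by
    intro τ
    unfold trajProb gProb KmixK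
    refine congrArg _ (Finset.prod_congr rfl fun t _ => ?_)
    rw [if_pos t.isLt]
  have htel : ∀ τ : S × (Fin T → A × S),
      |trajProb ρ₀ P πstar τ - trajProb ρ₀ P π τ| ≤
        ∑ k ∈ Finset.range T, gProb ρ₀ (KdK π πstar P k) T τ := by
    intro τ
    rw [hid0, hidT, abs_sub_comm]
    have htel0 : gProb ρ₀ (KmixK π πstar P T) T τ - gProb ρ₀ (KmixK π πstar P 0) T τ
        = ∑ k ∈ Finset.range T, (gProb ρ₀ (KmixK π πstar P (k+1)) T τ
            - gProb ρ₀ (KmixK π πstar P k) T τ) :=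
      (Finset.sum_range_sub (fun j => gProb ρ₀ (KmixK π πstar P j) T τ) T).symm
    rw [htel0]
    refine (Finset.abs_sum_le_sum_abs _ _).trans (le_of_eq ?_)
    refine Finset.sum_congr rfl fun k hk => ?_
    exact abs_gProb_diff ρ₀ hρ hP hπ hπs (Finset.mem_range.1 hk) τ
  have hsum : ∀ k, k < T → ∑ τ : S × (Fin T → A × S), gProb ρ₀ (KdK π πstar P k) T τ
      = ∑ s, stateDist ρ₀ P π k s * ∑ a, |πstar s a - π s a| := by
    intro k hk
    have h1 := sum_gProb ρ₀ (KdK π πstar P k) T (fun _ => (1:ℝ))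
    simp only [mul_one] at h1
    rw [h1]
    have h2 : ∑ s, Wdist ρ₀ (KdK π πstar P k) T s
        = ∑ s, Wdist ρ₀ (KdK π πstar P k) (k+1) s := by
      refine sum_Wdist_const ρ₀ _ (k+1) ?_ T hk
      intro t ht s
      unfold KdK
      simp only [if_neg (show ¬ t < k by omega), if_neg (show ¬ t = k by omega)]
      rw [Fintype.sum_prod_type]
      have : ∀ a : A, ∑ s' : S, πstar s a * P s a s' = πstar s a := fun a => by
        rw [← Finset.mul_sum, hPsum s a, mul_one]
      rw [Finset.sum_congr rfl fun a _ => this a, hπssum s]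
    rw [h2]
    have h3 : Wdist ρ₀ (KdK π πstar P k) k = stateDist ρ₀ P π k := by
      refine Wdist_eq_stateDist ρ₀ P π _ k ?_ k le_rfl
      intro t ht s p
      unfold KdK
      rw [if_pos ht]
    show ∑ s : S, ∑ s' : S, ∑ a : A,
        Wdist ρ₀ (KdK π πstar P k) k s' * KdK π πstar P k k s' (a, s) = _
    have h4 : ∀ (s s' : S) (a : A),
        Wdist ρ₀ (KdK π πstar P k) k s' * KdK π πstar P k k s' (a, s)
          = stateDist ρ₀ P π k s' * (|πstar s' a - π s' a| * P s' a s) := by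
      intro s s' a
      rw [h3]
      unfold KdK
      rw [if_neg (lt_irrefl k), if_pos rfl]
    simp only [h4]
    calc ∑ s : S, ∑ s' : S, ∑ a : A,
          stateDist ρ₀ P π k s' * (|πstar s' a - π s' a| * P s' a s)
        = ∑ s' : S, ∑ s : S, ∑ a : A,
          stateDist ρ₀ P π k s' * (|πstar s' a - π s' a| * P s' a s) := Finset.sum_comm
      _ = ∑ s' : S, ∑ a : A, ∑ s : S,
          stateDist ρ₀ P π k s' * (|πstar s' a - π s' a| * P s' a s) :=
          Finset.sum_congr rfl fun _ _ => Finset.sum_comm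
      _ = ∑ s' : S, stateDist ρ₀ P π k s' * ∑ a : A, |πstar s' a - π s' a| := by
          refine Finset.sum_congr rfl fun s' _ => ?_
          rw [Finset.mul_sum]
          refine Finset.sum_congr rfl fun a _ => ?_
          rw [← Finset.mul_sum, ← Finset.mul_sum, hPsum s' a, mul_one]
  have hT0 : (T : ℝ) ≠ 0 := Nat.cast_ne_zero.mpr (by omega)
  have hR : (T : ℝ) * ∑ s, avgStateDist ρ₀ P π T s * ((1/2) * ∑ a, |πstar s a - π s a|)
      = (1/2) * ∑ k ∈ Finset.range T, ∑ s,
          stateDist ρ₀ P π k s * ∑ a, |πstar s a - π s a| := by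
    calc (T : ℝ) * ∑ s, avgStateDist ρ₀ P π T s * ((1/2) * ∑ a, |πstar s a - π s a|)
        = ∑ s, (1/2) * ((∑ k ∈ Finset.range T, stateDist ρ₀ P π k s) *
            ∑ a, |πstar s a - π s a|) := by
          rw [Finset.mul_sum]
          refine Finset.sum_congr rfl fun s _ => ?_
          unfold avgStateDist
          field_simp
      _ = (1/2) * ∑ s, ∑ k ∈ Finset.range T,
            stateDist ρ₀ P π k s * ∑ a, |πstar s a - π s a| := by
          rw [Finset.mul_sum]
          exact Finset.sum_congr rfl fun s _ => by rw [Finset.sum_mul]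
      _ = (1/2) * ∑ k ∈ Finset.range T, ∑ s,
            stateDist ρ₀ P π k s * ∑ a, |πstar s a - π s a| := by rw [Finset.sum_comm]
  rw [hR]
  refine mul_le_mul_of_nonneg_left ?_ (by norm_num)
  calc ∑ τ : S × (Fin T → A × S), |trajProb ρ₀ P πstar τ - trajProb ρ₀ P π τ|
      ≤ ∑ τ : S × (Fin T → A × S), ∑ k ∈ Finset.range T, gProb ρ₀ (KdK π πstar P k) T τ :=
        Finset.sum_le_sum fun τ _ => htel τ
    _ = ∑ k ∈ Finset.range T, ∑ τ : S × (Fin T → A × S), gProb ρ₀ (KdK π πstar P k) T τ :=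
        Finset.sum_comm
    _ = ∑ k ∈ Finset.range T, ∑ s, stateDist ρ₀ P π k s * ∑ a, |πstar s a - π s a| :=
        Finset.sum_congr rfl fun k hk => hsum k (Finset.mem_range.1 hk)



section KLAux
variable {A : Type*} [Fintype A]

lemma pt_sq_le {p q : ℝ} (hp : 0 < p) (hq : 0 < q) :
    (Real.sqrt p - Real.sqrt q)^2 ≤ p * Real.log (p / q) + q - p := by
  have hqp : (0:ℝ) < q / p := div_pos hq hp
  have h2 : Real.log (Real.sqrt (q/p)) ≤ Real.sqrt (q/p) - 1 :=
    Real.log_le_sub_one_of_pos (Real.sqrt_pos.mpr hqp)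
  have h3 : Real.log (Real.sqrt (q/p)) = Real.log (q/p) / 2 := Real.log_sqrt hqp.le
  have h1 : Real.log (q / p) ≤ 2 * (Real.sqrt (q/p) - 1) := by linarith
  have hlog : Real.log (p / q) = - Real.log (q / p) := by
    rw [← Real.log_inv, inv_div]
  have hsq : p * Real.sqrt (q / p) = Real.sqrt p * Real.sqrt q := by
    rw [Real.sqrt_div hq.le, show p * (Real.sqrt q / Real.sqrt p)
      = (p / Real.sqrt p) * Real.sqrt q by ring, Real.div_sqrt]
  have e1 : Real.sqrt p ^ 2 = p := Real.sq_sqrt hp.le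
  have e2 : Real.sqrt q ^ 2 = q := Real.sq_sqrt hq.le
  have h4 := mul_le_mul_of_nonneg_left h1 hp.le
  have h5 : 2*p - 2*(Real.sqrt p * Real.sqrt q) ≤ p * Real.log (p/q) := by
    rw [hlog]
    nlinarith
  nlinarith

variable {A : Type*} [Fintype A]

lemma hellinger_le_kl {p q : A → ℝ} (hp : ∀ a, 0 < p a) (hq : ∀ a, 0 < q a)
    (hps : ∑ a, p a = 1) (hqs : ∑ a, q a = 1) :
    ∑ a, (Real.sqrt (p a) - Real.sqrt (q a))^2 ≤ ∑ a, p a * Real.log (p a / q a) := by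
  have h : ∑ a, (Real.sqrt (p a) - Real.sqrt (q a))^2
      ≤ ∑ a, (p a * Real.log (p a / q a) + q a - p a) :=
    Finset.sum_le_sum fun a _ => pt_sq_le (hp a) (hq a)
  calc ∑ a, (Real.sqrt (p a) - Real.sqrt (q a))^2
      ≤ ∑ a, (p a * Real.log (p a / q a) + q a - p a) := h
    _ = ∑ a, p a * Real.log (p a / q a) := by
        rw [Finset.sum_sub_distrib, Finset.sum_add_distrib, hps, hqs]
        ring

lemma kl_nonneg {p q : A → ℝ} (hp : ∀ a, 0 < p a) (hq : ∀ a, 0 < q a)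
    (hps : ∑ a, p a = 1) (hqs : ∑ a, q a = 1) :
    0 ≤ ∑ a, p a * Real.log (p a / q a) :=
  le_trans (Finset.sum_nonneg fun a _ => sq_nonneg _) (hellinger_le_kl hp hq hps hqs)

lemma tv_le_sqrt_kl {p q : A → ℝ} (hp : ∀ a, 0 < p a) (hq : ∀ a, 0 < q a)
    (hps : ∑ a, p a = 1) (hqs : ∑ a, q a = 1) :
    (1/2) * ∑ a, |p a - q a| ≤ Real.sqrt (∑ a, p a * Real.log (p a / q a)) := by
  set KL := ∑ a, p a * Real.log (p a / q a) with hKLdef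
  have hH : ∑ a, (Real.sqrt (p a) - Real.sqrt (q a))^2 ≤ KL :=
    hellinger_le_kl hp hq hps hqs
  have hH0 : 0 ≤ ∑ a, (Real.sqrt (p a) - Real.sqrt (q a))^2 :=
    Finset.sum_nonneg fun a _ => sq_nonneg _
  have hKL0 : 0 ≤ KL := le_trans hH0 hH
  have hCS : (∑ a, |p a - q a|)^2 ≤ (∑ a, (Real.sqrt (p a) - Real.sqrt (q a))^2) *
      (∑ a, (Real.sqrt (p a) + Real.sqrt (q a))^2) := by
    have hcs := Finset.sum_mul_sq_le_sq_mul_sq Finset.univ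
      (fun a => |Real.sqrt (p a) - Real.sqrt (q a)|)
      (fun a => Real.sqrt (p a) + Real.sqrt (q a))
    have hfac : ∀ a, |p a - q a|
        = |Real.sqrt (p a) - Real.sqrt (q a)| * (Real.sqrt (p a) + Real.sqrt (q a)) := by
      intro a
      have e1 : Real.sqrt (p a) ^ 2 = p a := Real.sq_sqrt (hp a).le
      have e2 : Real.sqrt (q a) ^ 2 = q a := Real.sq_sqrt (hq a).le
      have e3 : p a - q a = (Real.sqrt (p a) - Real.sqrt (q a)) *
          (Real.sqrt (p a) + Real.sqrt (q a)) := by nlinarith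
      rw [e3, abs_mul, abs_of_nonneg (show (0:ℝ) ≤ Real.sqrt (p a) + Real.sqrt (q a) by positivity)]
    simp only [hfac]
    simpa [sq_abs] using hcs
  have hfour : ∑ a, (Real.sqrt (p a) + Real.sqrt (q a))^2 ≤ 4 := by
    have hpt : ∀ a, (Real.sqrt (p a) + Real.sqrt (q a))^2 ≤ 2 * p a + 2 * q a := by
      intro a
      have h2ab := two_mul_le_add_sq (Real.sqrt (p a)) (Real.sqrt (q a))
      have e1 : Real.sqrt (p a) ^ 2 = p a := Real.sq_sqrt (hp a).le
      have e2 : Real.sqrt (q a) ^ 2 = q a := Real.sq_sqrt (hq a).le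
      nlinarith
    calc ∑ a, (Real.sqrt (p a) + Real.sqrt (q a))^2 ≤ ∑ a, (2 * p a + 2 * q a) :=
          Finset.sum_le_sum fun a _ => hpt a
      _ = 4 := by
          rw [Finset.sum_add_distrib, ← Finset.mul_sum, ← Finset.mul_sum, hps, hqs]
          norm_num
  have habs0 : 0 ≤ ∑ a, |p a - q a| := Finset.sum_nonneg fun a _ => abs_nonneg _
  have hsq : (∑ a, |p a - q a|)^2 ≤ 4 * KL := by
    calc (∑ a, |p a - q a|)^2 ≤ _ := hCS
      _ ≤ KL * 4 := mul_le_mul hH hfour (Finset.sum_nonneg fun a _ => sq_nonneg _) hKL0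
      _ = 4 * KL := mul_comm _ _
  have hfin : ∑ a, |p a - q a| ≤ 2 * Real.sqrt KL := by
    calc ∑ a, |p a - q a| = Real.sqrt ((∑ a, |p a - q a|)^2) := (Real.sqrt_sq habs0).symm
      _ ≤ Real.sqrt (4 * KL) := Real.sqrt_le_sqrt hsq
      _ = 2 * Real.sqrt KL := by
          rw [show (4:ℝ)*KL = (2:ℝ)^2 * KL by norm_num,
            Real.sqrt_mul (by positivity), Real.sqrt_sq (by norm_num)]
  linarith

end KLAux

section StateAux
variable {S A : Type*} [Fintype S] [Fintype A]

lemma stateDist_nonneg (ρ₀ : S → ℝ) (hρ : ∀ s, 0 ≤ ρ₀ s)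
    (P : S → A → S → ℝ) (hP : ∀ s a s', 0 ≤ P s a s')
    (π : S → A → ℝ) (hπ : ∀ s a, 0 ≤ π s a) :
    ∀ t s, 0 ≤ stateDist ρ₀ P π t s := by
  intro t
  induction t with
  | zero => exact hρ
  | succ t ih =>
      intro s
      exact Finset.sum_nonneg fun s' _ => Finset.sum_nonneg fun a _ =>
        mul_nonneg (mul_nonneg (ih s') (hπ s' a)) (hP s' a s)

lemma sum_stateDist (ρ₀ : S → ℝ) (hρsum : ∑ s, ρ₀ s = 1)
    (P : S → A → S → ℝ) (hPsum : ∀ s a, ∑ s', P s a s' = 1)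
    (π : S → A → ℝ) (hπsum : ∀ s, ∑ a, π s a = 1) :
    ∀ t, ∑ s, stateDist ρ₀ P π t s = 1 := by
  intro t
  induction t with
  | zero => exact hρsum
  | succ t ih =>
      show ∑ s : S, ∑ s' : S, ∑ a : A, stateDist ρ₀ P π t s' * π s' a * P s' a s = 1
      calc ∑ s : S, ∑ s' : S, ∑ a : A, stateDist ρ₀ P π t s' * π s' a * P s' a s
          = ∑ s' : S, ∑ s : S, ∑ a : A, stateDist ρ₀ P π t s' * π s' a * P s' a s :=
            Finset.sum_comm
        _ = ∑ s' : S, ∑ a : A, ∑ s : S, stateDist ρ₀ P π t s' * π s' a * P s' a s :=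
            Finset.sum_congr rfl fun _ _ => Finset.sum_comm
        _ = ∑ s' : S, ∑ a : A, stateDist ρ₀ P π t s' * π s' a := by
            refine Finset.sum_congr rfl fun s' _ => Finset.sum_congr rfl fun a _ => ?_
            rw [← Finset.mul_sum, hPsum s' a, mul_one]
        _ = ∑ s' : S, stateDist ρ₀ P π t s' := by
            refine Finset.sum_congr rfl fun s' _ => ?_
            rw [← Finset.mul_sum, hπsum s', mul_one]
        _ = 1 := ih

lemma avgStateDist_nonneg (ρ₀ : S → ℝ) (hρ : ∀ s, 0 ≤ ρ₀ s)
    (P : S → A → S → ℝ) (hP : ∀ s a s', 0 ≤ P s a s')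
    (π : S → A → ℝ) (hπ : ∀ s a, 0 ≤ π s a) (T : ℕ) (s : S) :
    0 ≤ avgStateDist ρ₀ P π T s :=
  mul_nonneg (by positivity) (Finset.sum_nonneg fun t _ =>
    stateDist_nonneg ρ₀ hρ P hP π hπ t s)

lemma sum_avgStateDist (ρ₀ : S → ℝ) (hρsum : ∑ s, ρ₀ s = 1)
    (P : S → A → S → ℝ) (hPsum : ∀ s a, ∑ s', P s a s' = 1)
    (π : S → A → ℝ) (hπsum : ∀ s, ∑ a, π s a = 1) (T : ℕ) (hT : 1 ≤ T) :
    ∑ s, avgStateDist ρ₀ P π T s = 1 := by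
  have hT0 : (T : ℝ) ≠ 0 := Nat.cast_ne_zero.mpr (by omega)
  unfold avgStateDist
  rw [← Finset.mul_sum, Finset.sum_comm]
  rw [Finset.sum_congr rfl fun t _ => sum_stateDist ρ₀ hρsum P hPsum π hπsum t]
  rw [Finset.sum_const, Finset.card_range, nsmul_eq_mul, mul_one]
  field_simp

end StateAux

end AuxPolicy

/-- **Total variation chain of inequalities.** The TV distance between trajectory
distributions is at most `T` times the expected per-state action TV distance, which in
turn is at most `T` times the square root of the expected per-state action KL divergence. -/
theorem traj_tv_le_action_tv_le_sqrt_kl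
    {S A : Type*} [Fintype S] [Nonempty S] [Fintype A] [Nonempty A]
    (ρ₀ : S → ℝ) (hρ₀pos : ∀ s, 0 < ρ₀ s) (hρ₀sum : ∑ s, ρ₀ s = 1)
    (P : S → A → S → ℝ) (hPpos : ∀ s a s', 0 < P s a s')
    (hPsum : ∀ s a, ∑ s', P s a s' = 1)
    (T : ℕ) (hT : 1 ≤ T)
    (π πstar : S → A → ℝ)
    (hπpos : ∀ s a, 0 < π s a) (hπsum : ∀ s, ∑ a, π s a = 1)
    (hπstarpos : ∀ s a, 0 < πstar s a) (hπstarsum : ∀ s, ∑ a, πstar s a = 1) :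
    (1 / 2) * (∑ τ : S × (Fin T → A × S),
        |trajProb ρ₀ P πstar τ - trajProb ρ₀ P π τ|) ≤
      (T : ℝ) * ∑ s : S, avgStateDist ρ₀ P π T s *
        ((1 / 2) * ∑ a : A, |πstar s a - π s a|) ∧
    (T : ℝ) * (∑ s : S, avgStateDist ρ₀ P π T s *
        ((1 / 2) * ∑ a : A, |πstar s a - π s a|)) ≤
      (T : ℝ) * Real.sqrt (∑ s : S, avgStateDist ρ₀ P π T s *
        ∑ a : A, πstar s a * Real.log (πstar s a / π s a)) := by
  constructor
  · exact part1 ρ₀ (fun s => (hρ₀pos s).le) P (fun s a s' => (hPpos s a s').le) hPsum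
      π πstar (fun s a => (hπpos s a).le) (fun s a => (hπstarpos s a).le) hπstarsum T hT
  · refine mul_le_mul_of_nonneg_left ?_ (Nat.cast_nonneg T)
    have havg0 : ∀ s, 0 ≤ avgStateDist ρ₀ P π T s :=
      avgStateDist_nonneg ρ₀ (fun s => (hρ₀pos s).le) P (fun s a s' => (hPpos s a s').le)
        π (fun s a => (hπpos s a).le) T
    have havgsum : ∑ s, avgStateDist ρ₀ P π T s = 1 :=
      sum_avgStateDist ρ₀ hρ₀sum P hPsum π hπsum T hT
    have hKL0 : ∀ s, 0 ≤ ∑ a, πstar s a * Real.log (πstar s a / π s a) := fun s =>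
      kl_nonneg (hπstarpos s) (hπpos s) (hπstarsum s) (hπsum s)
    calc ∑ s, avgStateDist ρ₀ P π T s * ((1/2) * ∑ a, |πstar s a - π s a|)
        ≤ ∑ s, avgStateDist ρ₀ P π T s *
            Real.sqrt (∑ a, πstar s a * Real.log (πstar s a / π s a)) :=
          Finset.sum_le_sum fun s _ => mul_le_mul_of_nonneg_left
            (tv_le_sqrt_kl (hπstarpos s) (hπpos s) (hπstarsum s) (hπsum s)) (havg0 s)
      _ = ∑ s, Real.sqrt (avgStateDist ρ₀ P π T s) *
            Real.sqrt (avgStateDist ρ₀ P π T s *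
              ∑ a, πstar s a * Real.log (πstar s a / π s a)) := by
          refine Finset.sum_congr rfl fun s _ => ?_
          rw [Real.sqrt_mul (havg0 s), ← mul_assoc, Real.mul_self_sqrt (havg0 s)]
      _ ≤ Real.sqrt (∑ s, avgStateDist ρ₀ P π T s) *
            Real.sqrt (∑ s, avgStateDist ρ₀ P π T s *
              ∑ a, πstar s a * Real.log (πstar s a / π s a)) :=
          Real.sum_sqrt_mul_sqrt_le _ havg0 (fun s => mul_nonneg (havg0 s) (hKL0 s))
      _ = _ := by rw [havgsum, Real.sqrt_one, one_mul]

end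
end

section
/- In a finite-horizon MDP, let π and π* be stochastic policies with ρ₀(s) > 0, P(s'|s,a) > 0, π(a|s) > 0 and π*(a|s) > 0 for all s, s', a. Then the KL divergence between trajectory distributions equals T times the expected cross-entropy gap under the expert's state-action distribution: ∑_τ ρ_{π*}(τ)·log(ρ_{π*}(τ)/ρ_π(τ)) = T · ∑_{s∈S} ρ_{π*}(s) · ∑_{a∈A} π*(a|s)·( log π*(a|s) − log π(a|s) ). -/
noncomputable section

namespace BCaux

set_option linter.unusedSectionVars false

variable {S A : Type*} [Fintype S] [Fintype A]

def prodSteps {T : ℕ} (P : S → A → S → ℝ) (π : S → A → ℝ)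
    (τ : S × (Fin T → A × S)) : ℝ :=
  ∏ t : Fin T, (π (prevState τ t) (τ.2 t).1 * P (prevState τ t) (τ.2 t).1 (τ.2 t).2)

lemma sum_pi_succ {n : ℕ} {X : Type*} [Fintype X] (F : (Fin (n + 1) → X) → ℝ) :
    ∑ f, F f = ∑ p : X, ∑ g : Fin n → X, F (Fin.cons p g) := by
  have h : ∑ f, F f = ∑ p : X × (Fin n → X), F (Fin.cons p.1 p.2) :=
    (Fintype.sum_equiv (Fin.consEquiv fun _ => X) _ _ (fun p => rfl)).symm
  rw [h, Fintype.sum_prod_type]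

lemma prevState_cons_zero {T : ℕ} (s₀ : S) (p : A × S) (f : Fin T → A × S) :
    prevState (s₀, Fin.cons p f) (0 : Fin (T + 1)) = s₀ := rfl

lemma prevState_cons_succ {T : ℕ} (s₀ : S) (p : A × S) (f : Fin T → A × S) (i : Fin T) :
    prevState (s₀, Fin.cons p f) i.succ = prevState (p.2, f) i := by
  rcases i with ⟨i, hi⟩
  cases i with
  | zero => rfl
  | succ j => rfl

lemma prodSteps_cons {T : ℕ} (P : S → A → S → ℝ) (π : S → A → ℝ)
    (s₀ : S) (p : A × S) (f : Fin T → A × S) :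
    prodSteps P π (s₀, Fin.cons p f) =
      π s₀ p.1 * P s₀ p.1 p.2 * prodSteps P π (p.2, f) := by
  unfold prodSteps
  rw [Fin.prod_univ_succ]
  simp only [Fin.cons_succ, Fin.cons_zero, prevState_cons_succ, prevState_cons_zero]

lemma prodSteps_mass (P : S → A → S → ℝ) (π : S → A → ℝ)
    (hPsum : ∀ s a, ∑ s', P s a s' = 1) (hπsum : ∀ s, ∑ a, π s a = 1) :
    ∀ (T : ℕ) (s : S), ∑ f : Fin T → A × S, prodSteps P π (s, f) = 1 := by
  intro T
  induction T with
  | zero => intro s; simp [prodSteps]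
  | succ T ih =>
    intro s
    rw [sum_pi_succ (fun f => prodSteps P π (s, f))]
    have h1 : ∀ p : A × S, ∑ g : Fin T → A × S, prodSteps P π (s, Fin.cons p g)
        = π s p.1 * P s p.1 p.2 := by
      intro p
      simp only [prodSteps_cons, ← Finset.mul_sum, ih p.2, mul_one]
    rw [Finset.sum_congr rfl fun p _ => h1 p, Fintype.sum_prod_type]
    simp only [← Finset.mul_sum, hPsum, mul_one, hπsum]

lemma stateDist_shift (ρ₀ : S → ℝ) (P : S → A → S → ℝ) (π : S → A → ℝ) :
    ∀ t : ℕ, stateDist ρ₀ P π (t + 1) = stateDist (stateDist ρ₀ P π 1) P π t := by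
  intro t
  induction t with
  | zero => rfl
  | succ t ih =>
    show (fun s => ∑ s' : S, ∑ a : A, stateDist ρ₀ P π (t+1) s' * π s' a * P s' a s) = _
    rw [ih]; rfl

lemma sum_traj (P : S → A → S → ℝ) (π : S → A → ℝ)
    (hPsum : ∀ s a, ∑ s', P s a s' = 1) (hπsum : ∀ s, ∑ a, π s a = 1)
    (g : S → A → ℝ) :
    ∀ (T : ℕ) (ρ₀ : S → ℝ),
      ∑ τ : S × (Fin T → A × S),
        (ρ₀ τ.1 * prodSteps P π τ) * (∑ t : Fin T, g (prevState τ t) (τ.2 t).1)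
      = ∑ t ∈ Finset.range T, ∑ s, stateDist ρ₀ P π t s * ∑ a, π s a * g s a := by
  intro T
  induction T with
  | zero => intro ρ₀; simp
  | succ T ih =>
    intro ρ₀
    set Q : S → ℝ := fun s₁ => ∑ h : Fin T → A × S,
      (prodSteps P π (s₁, h)) * (∑ i : Fin T, g (prevState (s₁, h) i) (h i).1) with hQ
    rw [Fintype.sum_prod_type]
    have step : ∀ s₀ : S, ∑ f : Fin (T+1) → A × S,
        (ρ₀ s₀ * prodSteps P π (s₀, f)) * (∑ t : Fin (T+1), g (prevState (s₀, f) t) (f t).1)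
      = ∑ p : A × S,
          (ρ₀ s₀ * (π s₀ p.1 * P s₀ p.1 p.2) * g s₀ p.1
            + ρ₀ s₀ * (π s₀ p.1 * P s₀ p.1 p.2) * Q p.2) := by
      intro s₀
      rw [sum_pi_succ]
      refine Finset.sum_congr rfl fun p _ => ?_
      have hterm : ∀ h : Fin T → A × S,
          (ρ₀ s₀ * prodSteps P π (s₀, Fin.cons p h)) *
            (∑ t : Fin (T+1), g (prevState (s₀, Fin.cons p h) t) ((Fin.cons p h : Fin (T+1) → A × S) t).1)
        = (ρ₀ s₀ * (π s₀ p.1 * P s₀ p.1 p.2) * g s₀ p.1) * prodSteps P π (p.2, h)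
          + ρ₀ s₀ * (π s₀ p.1 * P s₀ p.1 p.2) *
              ((prodSteps P π (p.2, h)) * (∑ i : Fin T, g (prevState (p.2, h) i) (h i).1)) := by
        intro h
        rw [prodSteps_cons, Fin.sum_univ_succ]
        simp only [Fin.cons_succ, Fin.cons_zero, prevState_cons_succ, prevState_cons_zero]
        ring
      rw [Finset.sum_congr rfl fun h _ => hterm h, Finset.sum_add_distrib,
        ← Finset.mul_sum, ← Finset.mul_sum, prodSteps_mass P π hPsum hπsum T p.2, mul_one]
    rw [Finset.sum_congr rfl fun s₀ _ => step s₀]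
    simp only [Finset.sum_add_distrib]
    have first : ∑ s₀ : S, ∑ p : A × S, ρ₀ s₀ * (π s₀ p.1 * P s₀ p.1 p.2) * g s₀ p.1
        = ∑ s : S, stateDist ρ₀ P π 0 s * ∑ a : A, π s a * g s a := by
      refine Finset.sum_congr rfl fun s₀ _ => ?_
      rw [Fintype.sum_prod_type]
      have h1 : ∀ a : A, ∑ s' : S, ρ₀ s₀ * (π s₀ a * P s₀ a s') * g s₀ a
          = ρ₀ s₀ * (π s₀ a * g s₀ a) := by
        intro a
        have : ∀ s' : S, ρ₀ s₀ * (π s₀ a * P s₀ a s') * g s₀ a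
            = (ρ₀ s₀ * (π s₀ a * g s₀ a)) * P s₀ a s' := fun s' => by ring
        rw [Finset.sum_congr rfl fun s' _ => this s', ← Finset.mul_sum, hPsum, mul_one]
      rw [Finset.sum_congr rfl fun a _ => h1 a, ← Finset.mul_sum]
      rfl
    have second : (∑ s₀ : S, ∑ p : A × S, ρ₀ s₀ * (π s₀ p.1 * P s₀ p.1 p.2) * Q p.2)
        = ∑ t ∈ Finset.range T, ∑ s, stateDist ρ₀ P π (t + 1) s * ∑ a, π s a * g s a := by
      have h1 : ∀ s₀ : S, ∑ p : A × S, ρ₀ s₀ * (π s₀ p.1 * P s₀ p.1 p.2) * Q p.2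
          = ∑ s₁ : S, ∑ a : A, ρ₀ s₀ * π s₀ a * P s₀ a s₁ * Q s₁ := by
        intro s₀
        rw [Fintype.sum_prod_type, Finset.sum_comm]
        exact Finset.sum_congr rfl fun s₁ _ => Finset.sum_congr rfl fun a _ => by ring
      rw [Finset.sum_congr rfl fun s₀ _ => h1 s₀, Finset.sum_comm]
      have h2 : ∀ s₁ : S, ∑ s₀ : S, ∑ a : A, ρ₀ s₀ * π s₀ a * P s₀ a s₁ * Q s₁
          = stateDist ρ₀ P π 1 s₁ * Q s₁ := by
        intro s₁
        simp only [← Finset.sum_mul]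
        rfl
      rw [Finset.sum_congr rfl fun s₁ _ => h2 s₁]
      have h3 : ∑ s₁ : S, stateDist ρ₀ P π 1 s₁ * Q s₁
          = ∑ τ : S × (Fin T → A × S),
              (stateDist ρ₀ P π 1 τ.1 * prodSteps P π τ) *
                (∑ t : Fin T, g (prevState τ t) (τ.2 t).1) := by
        rw [Fintype.sum_prod_type]
        refine Finset.sum_congr rfl fun s₁ _ => ?_
        simp only [hQ, Finset.mul_sum, mul_assoc]
      rw [h3, ih (stateDist ρ₀ P π 1)]
      exact Finset.sum_congr rfl fun t _ => by rw [← stateDist_shift]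
    rw [first, second, Finset.sum_range_succ']
    exact add_comm _ _

end BCaux

/-- **Forward KL identity (behavior cloning).** The KL divergence between trajectory
distributions equals `T` times the expected cross-entropy gap under the expert's
state-action distribution. -/
theorem traj_kl_eq_behavior_cloning
    {S A : Type*} [Fintype S] [Nonempty S] [Fintype A] [Nonempty A]
    (ρ₀ : S → ℝ) (hρ₀pos : ∀ s, 0 < ρ₀ s) (hρ₀sum : ∑ s, ρ₀ s = 1)
    (P : S → A → S → ℝ) (hPpos : ∀ s a s', 0 < P s a s')
    (hPsum : ∀ s a, ∑ s', P s a s' = 1)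
    (T : ℕ) (hT : 1 ≤ T)
    (π πstar : S → A → ℝ)
    (hπpos : ∀ s a, 0 < π s a) (hπsum : ∀ s, ∑ a, π s a = 1)
    (hπstarpos : ∀ s a, 0 < πstar s a) (hπstarsum : ∀ s, ∑ a, πstar s a = 1) :
    ∑ τ : S × (Fin T → A × S),
        trajProb ρ₀ P πstar τ * Real.log (trajProb ρ₀ P πstar τ / trajProb ρ₀ P π τ) =
      (T : ℝ) * ∑ s : S, avgStateDist ρ₀ P πstar T s *
        ∑ a : A, πstar s a * (Real.log (πstar s a) - Real.log (π s a)) := by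
  have hg : ∀ s a, (Real.log (πstar s a) - Real.log (π s a)) =
      (fun s a => Real.log (πstar s a) - Real.log (π s a)) s a := fun _ _ => rfl
  set g : S → A → ℝ := fun s a => Real.log (πstar s a) - Real.log (π s a) with hgdef
  have hpos : ∀ (π' : S → A → ℝ), (∀ s a, 0 < π' s a) →
      ∀ τ : S × (Fin T → A × S), 0 < trajProb ρ₀ P π' τ := by
    intro π' h τ
    exact mul_pos (hρ₀pos _) (Finset.prod_pos fun t _ => mul_pos (h _ _) (hPpos _ _ _))
  have hlogtp : ∀ (π' : S → A → ℝ), (∀ s a, 0 < π' s a) →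
      ∀ τ : S × (Fin T → A × S),
      Real.log (trajProb ρ₀ P π' τ) = Real.log (ρ₀ τ.1)
        + ∑ t : Fin T, (Real.log (π' (prevState τ t) (τ.2 t).1)
          + Real.log (P (prevState τ t) (τ.2 t).1 (τ.2 t).2)) := by
    intro π' h τ
    unfold trajProb
    rw [Real.log_mul (ne_of_gt (hρ₀pos _))
        (ne_of_gt (Finset.prod_pos fun t _ => mul_pos (h _ _) (hPpos _ _ _))),
      Real.log_prod (fun t _ => ne_of_gt (mul_pos (h _ _) (hPpos _ _ _)))]
    congr 1
    exact Finset.sum_congr rfl fun t _ =>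
      Real.log_mul (ne_of_gt (h _ _)) (ne_of_gt (hPpos _ _ _))
  have hlog : ∀ τ : S × (Fin T → A × S),
      Real.log (trajProb ρ₀ P πstar τ / trajProb ρ₀ P π τ)
        = ∑ t : Fin T, g (prevState τ t) (τ.2 t).1 := by
    intro τ
    rw [Real.log_div (ne_of_gt (hpos πstar hπstarpos τ)) (ne_of_gt (hpos π hπpos τ)),
      hlogtp πstar hπstarpos τ, hlogtp π hπpos τ, add_sub_add_left_eq_sub,
      ← Finset.sum_sub_distrib]
    refine Finset.sum_congr rfl fun t _ => ?_
    simp only [hgdef]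
    ring
  have key : ∑ τ : S × (Fin T → A × S),
      trajProb ρ₀ P πstar τ * Real.log (trajProb ρ₀ P πstar τ / trajProb ρ₀ P π τ)
    = ∑ t ∈ Finset.range T, ∑ s, stateDist ρ₀ P πstar t s * ∑ a, πstar s a * g s a := by
    rw [← BCaux.sum_traj P πstar hPsum hπstarsum g T ρ₀]
    exact Finset.sum_congr rfl fun τ _ => by rw [hlog τ]; rfl
  rw [key]
  have hT0 : (T : ℝ) ≠ 0 := Nat.cast_ne_zero.mpr (by omega)
  rw [Finset.mul_sum, Finset.sum_comm]
  refine Finset.sum_congr rfl fun s _ => ?_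
  unfold avgStateDist
  rw [← Finset.sum_mul]
  field_simp
  rfl

end
end

section
/- In a finite-horizon MDP with ρ₀(s) > 0 and P(s'|s,a) > 0 for all s, s', a, let π* be an expert policy with π*(a|s) ≥ c > 0 for all s, a, let Π be a finite set of stochastic policies with π* ∈ Π and π(a|s) > 0 for all π ∈ Π, s, a, and let π_0,…,π_{N−1} ∈ Π (N ≥ 1). For each n define the true ratio cost r_n(s,a) = π_n(a|s)/π*(a|s) − 1, let r̂_n : S × A → ℝ be estimated costs, and define ℓ_n(π) = ∑_s ρ_{π_n}(s)·∑_a π(a|s)·r_n(s,a) and ℓ̂_n(π) = ∑_s ρ_{π_n}(s)·∑_a π(a|s)·r̂_n(s,a). Assume: (i) estimation error ∑_s ρ_{π_n}(s)·∑_a π*(a|s)·|r̂_n(s,a) − r_n(s,a)| ≤ γ for every n; (ii) no-regret bound ∑_{n=0}^{N−1} ℓ̂_n(π_n) − min_{π∈Π} ∑_{n=0}^{N−1} ℓ̂_n(π) ≤ R. Let ε_class = min_{π∈Π} (1/N)·∑_{n=0}^{N−1} ℓ_n(π). Then there exists n ∈ {0,…,N−1} such that the reverse KL divergence satisfies ∑_τ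 ρ_{π_n}(τ)·log(ρ_{π_n}(τ)/ρ_{π*}(τ)) ≤ T·( (1 + 1/c)·γ + ε_class + R/N ). -/
noncomputable section

namespace DRE
variable {S A : Type*} [Fintype S] [Fintype A]

lemma prevState_zero {T : ℕ} (τ : S × (Fin (T+1) → A × S)) :
    prevState τ 0 = τ.1 := by
  simp [prevState]

lemma prevState_cons_succ {T : ℕ} (s₀ : S) (p : A × S) (f : Fin T → A × S) (t : Fin T) :
    prevState (s₀, Fin.cons p f) t.succ = prevState (p.2, f) t := by
  rcases t with ⟨tv, ht⟩
  cases tv with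
  | zero => simp [prevState]
  | succ m =>
    have hm : m < T := by omega
    simp only [prevState, Fin.val_succ]
    rw [dif_neg (by omega), dif_neg (by omega)]
    show (Fin.cons (α := fun _ => A × S) p f (Fin.succ (⟨m, hm⟩ : Fin T))).2 = (f ⟨m, hm⟩).2
    rw [Fin.cons_succ]

lemma stateDist_nonneg (ρ₀ : S → ℝ) (P : S → A → S → ℝ) (π : S → A → ℝ)
    (hρ : ∀ s, 0 ≤ ρ₀ s) (hπ : ∀ s a, 0 ≤ π s a) (hP : ∀ s a s', 0 ≤ P s a s') :
    ∀ t s, 0 ≤ stateDist ρ₀ P π t s := by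
  intro t
  induction t with
  | zero => exact hρ
  | succ t ih =>
    intro s
    refine Finset.sum_nonneg fun s' _ => Finset.sum_nonneg fun a _ => ?_
    exact mul_nonneg (mul_nonneg (ih s') (hπ _ _)) (hP _ _ _)

lemma stateDist_succ_eq (ρ₀ : S → ℝ) (P : S → A → S → ℝ) (π : S → A → ℝ) :
    ∀ t, stateDist ρ₀ P π (t+1) = stateDist (stateDist ρ₀ P π 1) P π t := by
  intro t
  induction t with
  | zero => rfl
  | succ t ih =>
    funext s
    show ∑ s' : S, ∑ a : A, stateDist ρ₀ P π (t+1) s' * π s' a * P s' a s = _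
    rw [ih]
    rfl

lemma trajProb_eq_mul {T : ℕ} (μ : S → ℝ) (P : S → A → S → ℝ) (π : S → A → ℝ)
    (τ : S × (Fin T → A × S)) :
    trajProb μ P π τ = μ τ.1 * trajProb (fun _ => (1:ℝ)) P π τ := by
  unfold trajProb; ring

lemma trajProb_nonneg {T : ℕ} (μ : S → ℝ) (P : S → A → S → ℝ) (π : S → A → ℝ)
    (hμ : ∀ s, 0 ≤ μ s) (hπ : ∀ s a, 0 ≤ π s a) (hP : ∀ s a s', 0 ≤ P s a s')
    (τ : S × (Fin T → A × S)) : 0 ≤ trajProb μ P π τ :=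
  mul_nonneg (hμ _) (Finset.prod_nonneg fun t _ => mul_nonneg (hπ _ _) (hP _ _ _))

lemma trajProb_pos {T : ℕ} (μ : S → ℝ) (P : S → A → S → ℝ) (π : S → A → ℝ)
    (hμ : ∀ s, 0 < μ s) (hπ : ∀ s a, 0 < π s a) (hP : ∀ s a s', 0 < P s a s')
    (τ : S × (Fin T → A × S)) : 0 < trajProb μ P π τ :=
  mul_pos (hμ _) (Finset.prod_pos fun t _ => mul_pos (hπ _ _) (hP _ _ _))

lemma trajProb_cons {T : ℕ} (ρ₀ : S → ℝ) (P : S → A → S → ℝ) (π : S → A → ℝ)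
    (s₀ : S) (p : A × S) (f : Fin T → A × S) :
    trajProb ρ₀ P π ((s₀, Fin.cons p f) : S × (Fin (T+1) → A × S)) =
      ρ₀ s₀ * (π s₀ p.1 * P s₀ p.1 p.2) *
        trajProb (fun _ => (1:ℝ)) P π ((p.2, f) : S × (Fin T → A × S)) := by
  unfold trajProb
  rw [Fin.prod_univ_succ]
  simp only [prevState_zero, Fin.cons_zero, Fin.cons_succ, prevState_cons_succ]
  ring

lemma sum_cons_reindex {T : ℕ} (F : (Fin (T+1) → A × S) → ℝ) :
    ∑ g : Fin (T+1) → A × S, F g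
      = ∑ p : A × S, ∑ f : Fin T → A × S, F (Fin.cons p f) := by
  rw [← (Fin.consEquiv (fun _ : Fin (T+1) => A × S)).sum_comp F, Fintype.sum_prod_type]
  rfl

lemma sum_prod_assoc {T : ℕ} (h : A → (S × (Fin T → A × S)) → ℝ) :
    ∑ p : A × S, ∑ f : Fin T → A × S, h p.1 (p.2, f)
      = ∑ a : A, ∑ τ' : S × (Fin T → A × S), h a τ' := by
  rw [Fintype.sum_prod_type]
  refine Finset.sum_congr rfl fun a _ => ?_
  rw [Fintype.sum_prod_type]

lemma trajProb_mass (P : S → A → S → ℝ) (π : S → A → ℝ)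
    (hπ : ∀ s, ∑ a, π s a = 1) (hP : ∀ s a, ∑ s', P s a s' = 1) :
    ∀ (T : ℕ) (ρ₀ : S → ℝ),
      ∑ τ : S × (Fin T → A × S), trajProb ρ₀ P π τ = ∑ s, ρ₀ s := by
  intro T
  induction T with
  | zero =>
    intro ρ₀
    rw [Fintype.sum_prod_type]
    simp [trajProb]
  | succ T ih =>
    intro ρ₀
    rw [Fintype.sum_prod_type]
    calc ∑ s₀, ∑ g : Fin (T+1) → A × S, trajProb ρ₀ P π (s₀, g)
        = ∑ s₀, ∑ a, ∑ τ' : S × (Fin T → A × S),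
            ρ₀ s₀ * π s₀ a * trajProb (P s₀ a) P π τ' := by
          refine Finset.sum_congr rfl fun s₀ _ => ?_
          rw [sum_cons_reindex, ← sum_prod_assoc
            (fun a τ' => ρ₀ s₀ * π s₀ a * trajProb (P s₀ a) P π τ')]
          refine Finset.sum_congr rfl fun p _ => Finset.sum_congr rfl fun f _ => ?_
          rw [trajProb_cons, trajProb_eq_mul (P s₀ p.1) P π (p.2, f)]
          ring
      _ = ∑ s₀, ∑ a, ρ₀ s₀ * π s₀ a := by
          refine Finset.sum_congr rfl fun s₀ _ => Finset.sum_congr rfl fun a _ => ?_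
          rw [← Finset.mul_sum, ih (P s₀ a), hP, mul_one]
      _ = ∑ s, ρ₀ s := by
          refine Finset.sum_congr rfl fun s₀ _ => ?_
          rw [← Finset.mul_sum, hπ, mul_one]

lemma stateDist_zero (ρ₀ : S → ℝ) (P : S → A → S → ℝ) (π : S → A → ℝ) :
    stateDist ρ₀ P π 0 = ρ₀ := rfl

lemma traj_marg (P : S → A → S → ℝ) (π : S → A → ℝ)
    (hπ : ∀ s, ∑ a, π s a = 1) (hP : ∀ s a, ∑ s', P s a s' = 1)
    (g : S → A → ℝ) :
    ∀ (T : ℕ) (ρ₀ : S → ℝ),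
      ∑ τ : S × (Fin T → A × S),
        trajProb ρ₀ P π τ * ∑ t : Fin T, g (prevState τ t) ((τ.2 t).1)
      = ∑ t ∈ Finset.range T, ∑ s, stateDist ρ₀ P π t s * ∑ a, π s a * g s a := by
  intro T
  induction T with
  | zero => intro ρ₀; simp
  | succ T ih =>
    intro ρ₀
    have expand : ∀ s₀ : S, ∑ g' : Fin (T+1) → A × S,
        trajProb ρ₀ P π (s₀, g') * ∑ t : Fin (T+1), g (prevState (s₀, g') t) (((s₀, g').2 t).1)
      = (∑ p : A × S, ∑ f : Fin T → A × S,
          (ρ₀ s₀ * (π s₀ p.1 * g s₀ p.1)) * trajProb (P s₀ p.1) P π (p.2, f))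
        + ∑ p : A × S, ∑ f : Fin T → A × S,
          (ρ₀ s₀ * π s₀ p.1) * (trajProb (P s₀ p.1) P π (p.2, f) *
              ∑ t : Fin T, g (prevState ((p.2, f) : S × (Fin T → A × S)) t) ((f t).1)) := by
      intro s₀
      rw [sum_cons_reindex (fun g' => trajProb ρ₀ P π (s₀, g') *
        ∑ t : Fin (T+1), g (prevState (s₀, g') t) (((s₀, g').2 t).1)),
        ← Finset.sum_add_distrib]
      refine Finset.sum_congr rfl fun p _ => ?_
      rw [← Finset.sum_add_distrib]
      refine Finset.sum_congr rfl fun f _ => ?_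
      rw [trajProb_cons, Fin.sum_univ_succ]
      simp only [prevState_zero, Fin.cons_zero, Fin.cons_succ, prevState_cons_succ]
      rw [trajProb_eq_mul (P s₀ p.1) P π (p.2, f)]
      ring
    have hA : (∑ s₀ : S, ∑ p : A × S, ∑ f : Fin T → A × S,
          (ρ₀ s₀ * (π s₀ p.1 * g s₀ p.1)) * trajProb (P s₀ p.1) P π (p.2, f))
        = ∑ s : S, stateDist ρ₀ P π 0 s * ∑ a, π s a * g s a := by
      refine Finset.sum_congr rfl fun s₀ _ => ?_
      rw [sum_prod_assoc (fun a τ' => (ρ₀ s₀ * (π s₀ a * g s₀ a)) * trajProb (P s₀ a) P π τ')]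
      rw [stateDist_zero, Finset.mul_sum]
      refine Finset.sum_congr rfl fun a _ => ?_
      rw [← Finset.mul_sum, trajProb_mass P π hπ hP T (P s₀ a), hP, mul_one]
    have hB : (∑ s₀ : S, ∑ p : A × S, ∑ f : Fin T → A × S,
          (ρ₀ s₀ * π s₀ p.1) * (trajProb (P s₀ p.1) P π (p.2, f) *
            ∑ t : Fin T, g (prevState ((p.2, f) : S × (Fin T → A × S)) t) ((f t).1)))
        = ∑ t ∈ Finset.range T, ∑ s, stateDist ρ₀ P π (t+1) s * ∑ a, π s a * g s a := by
      calc (∑ s₀ : S, ∑ p : A × S, ∑ f : Fin T → A × S,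
          (ρ₀ s₀ * π s₀ p.1) * (trajProb (P s₀ p.1) P π (p.2, f) *
            ∑ t : Fin T, g (prevState ((p.2, f) : S × (Fin T → A × S)) t) ((f t).1)))
          = ∑ s₀ : S, ∑ a : A, ∑ τ' : S × (Fin T → A × S),
              (ρ₀ s₀ * π s₀ a) * (trajProb (P s₀ a) P π τ' *
                ∑ t : Fin T, g (prevState τ' t) ((τ'.2 t).1)) := by
            refine Finset.sum_congr rfl fun s₀ _ => ?_
            rw [sum_prod_assoc (fun a τ' => (ρ₀ s₀ * π s₀ a) * (trajProb (P s₀ a) P π τ' *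
                ∑ t : Fin T, g (prevState τ' t) ((τ'.2 t).1)))]
        _ = ∑ τ' : S × (Fin T → A × S), ∑ s₀ : S, ∑ a : A,
              (ρ₀ s₀ * π s₀ a) * (trajProb (P s₀ a) P π τ' *
                ∑ t : Fin T, g (prevState τ' t) ((τ'.2 t).1)) := by
            rw [Finset.sum_congr rfl fun s₀ (_ : s₀ ∈ Finset.univ) =>
              (Finset.sum_comm (s := Finset.univ) (t := Finset.univ))]
            exact Finset.sum_comm
        _ = ∑ τ' : S × (Fin T → A × S),
              trajProb (stateDist ρ₀ P π 1) P π τ' *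
                ∑ t : Fin T, g (prevState τ' t) ((τ'.2 t).1) := by
            refine Finset.sum_congr rfl fun τ' _ => ?_
            have h1 : ∀ s₀ a, (ρ₀ s₀ * π s₀ a) * (trajProb (P s₀ a) P π τ' *
                  ∑ t : Fin T, g (prevState τ' t) ((τ'.2 t).1))
                = (ρ₀ s₀ * π s₀ a * P s₀ a τ'.1) *
                    (trajProb (fun _ => (1:ℝ)) P π τ' *
                      ∑ t : Fin T, g (prevState τ' t) ((τ'.2 t).1)) := by
              intro s₀ a
              rw [trajProb_eq_mul (P s₀ a) P π τ']
              ring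
            calc (∑ s₀ : S, ∑ a : A, (ρ₀ s₀ * π s₀ a) * (trajProb (P s₀ a) P π τ' *
                    ∑ t : Fin T, g (prevState τ' t) ((τ'.2 t).1)))
                = (∑ s₀ : S, ∑ a : A, ρ₀ s₀ * π s₀ a * P s₀ a τ'.1) *
                    (trajProb (fun _ => (1:ℝ)) P π τ' *
                      ∑ t : Fin T, g (prevState τ' t) ((τ'.2 t).1)) := by
                  rw [Finset.sum_mul]
                  refine Finset.sum_congr rfl fun s₀ _ => ?_
                  rw [Finset.sum_mul]
                  exact Finset.sum_congr rfl fun a _ => h1 s₀ a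
              _ = trajProb (stateDist ρ₀ P π 1) P π τ' *
                    ∑ t : Fin T, g (prevState τ' t) ((τ'.2 t).1) := by
                  rw [trajProb_eq_mul (stateDist ρ₀ P π 1) P π τ']
                  have : stateDist ρ₀ P π 1 τ'.1 = ∑ s₀ : S, ∑ a : A, ρ₀ s₀ * π s₀ a * P s₀ a τ'.1 := by
                    show ∑ s' : S, ∑ a : A, stateDist ρ₀ P π 0 s' * π s' a * P s' a τ'.1 = _
                    rfl
                  rw [this]
                  ring
        _ = ∑ t ∈ Finset.range T, ∑ s, stateDist ρ₀ P π (t+1) s * ∑ a, π s a * g s a := by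
            rw [ih (stateDist ρ₀ P π 1)]
            refine Finset.sum_congr rfl fun t _ => ?_
            rw [← stateDist_succ_eq]
    rw [Fintype.sum_prod_type]
    rw [Finset.sum_congr rfl (fun s₀ (_ : s₀ ∈ Finset.univ) => expand s₀),
      Finset.sum_add_distrib, hA, hB, Finset.sum_range_succ']
    ring


lemma log_ratio {T : ℕ} (ρ₀ : S → ℝ) (P : S → A → S → ℝ) (π π' : S → A → ℝ)
    (hρ : ∀ s, 0 < ρ₀ s) (hP : ∀ s a s', 0 < P s a s')
    (hπ : ∀ s a, 0 < π s a) (hπ' : ∀ s a, 0 < π' s a)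
    (τ : S × (Fin T → A × S)) :
    Real.log (trajProb ρ₀ P π τ / trajProb ρ₀ P π' τ)
      = ∑ t : Fin T, Real.log (π (prevState τ t) ((τ.2 t).1) / π' (prevState τ t) ((τ.2 t).1)) := by
  unfold trajProb
  rw [mul_div_mul_left _ _ (ne_of_gt (hρ _)), ← Finset.prod_div_distrib, Real.log_prod]
  · refine Finset.sum_congr rfl fun t _ => ?_
    rw [mul_div_mul_right _ _ (ne_of_gt (hP _ _ _))]
  · intro t _
    exact ne_of_gt (div_pos (mul_pos (hπ _ _) (hP _ _ _)) (mul_pos (hπ' _ _) (hP _ _ _)))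

lemma kl_le {T : ℕ} (ρ₀ : S → ℝ) (P : S → A → S → ℝ) (π π' : S → A → ℝ)
    (hρ : ∀ s, 0 < ρ₀ s) (hP : ∀ s a s', 0 < P s a s')
    (hπ : ∀ s a, 0 < π s a) (hπ' : ∀ s a, 0 < π' s a)
    (hπsum : ∀ s, ∑ a, π s a = 1) (hPsum : ∀ s a, ∑ s', P s a s' = 1) :
    ∑ τ : S × (Fin T → A × S),
        trajProb ρ₀ P π τ * Real.log (trajProb ρ₀ P π τ / trajProb ρ₀ P π' τ)
      ≤ ∑ t ∈ Finset.range T, ∑ s, stateDist ρ₀ P π t s *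
          ∑ a, π s a * (π s a / π' s a - 1) := by
  rw [← traj_marg P π hπsum hPsum (fun s a => π s a / π' s a - 1) T ρ₀]
  refine Finset.sum_le_sum fun τ _ => ?_
  refine mul_le_mul_of_nonneg_left ?_
    (trajProb_nonneg ρ₀ P π (fun s => le_of_lt (hρ s))
      (fun s a => le_of_lt (hπ s a)) (fun s a s' => le_of_lt (hP s a s')) τ)
  rw [log_ratio ρ₀ P π π' hρ hP hπ hπ' τ]
  exact Finset.sum_le_sum fun t _ =>
    Real.log_le_sub_one_of_pos (div_pos (hπ _ _) (hπ' _ _))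

lemma range_eq_T_mul (ρ₀ : S → ℝ) (P : S → A → S → ℝ) (π : S → A → ℝ)
    (T : ℕ) (hT : 1 ≤ T) (C : S → ℝ) :
    ∑ t ∈ Finset.range T, ∑ s, stateDist ρ₀ P π t s * C s
      = (T : ℝ) * ∑ s, avgStateDist ρ₀ P π T s * C s := by
  have hT0 : (T : ℝ) ≠ 0 := by
    exact_mod_cast Nat.one_le_iff_ne_zero.mp hT
  unfold avgStateDist
  rw [Finset.mul_sum, Finset.sum_comm]
  refine Finset.sum_congr rfl fun s _ => ?_
  rw [← Finset.sum_mul]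
  field_simp

end DRE

/-- **Theorem 4 (interactive density-ratio minimization via no-regret learning).**
Under estimation error `γ` for the density-ratio costs and a no-regret bound `R` for the
sequence of surrogate losses, some policy among `π_0, …, π_{N−1}` has trajectory reverse
KL divergence to the expert at most `T·((1 + 1/c)·γ + ε_class + R/N)`. -/
theorem interactive_dre_guarantee
    {S A : Type*} [Fintype S] [Nonempty S] [Fintype A] [Nonempty A]
    (ρ₀ : S → ℝ) (hρ₀pos : ∀ s, 0 < ρ₀ s) (hρ₀sum : ∑ s, ρ₀ s = 1)
    (P : S → A → S → ℝ) (hPpos : ∀ s a s', 0 < P s a s')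
    (hPsum : ∀ s a, ∑ s', P s a s' = 1)
    (T : ℕ) (hT : 1 ≤ T)
    (c : ℝ) (hc : 0 < c)
    (πstar : S → A → ℝ) (hπstarlb : ∀ s a, c ≤ πstar s a)
    (hπstarsum : ∀ s, ∑ a, πstar s a = 1)
    (Pol : Finset (S → A → ℝ)) (hπstarmem : πstar ∈ Pol)
    (hPolpos : ∀ π ∈ Pol, ∀ s a, 0 < π s a)
    (hPolsum : ∀ π ∈ Pol, ∀ s, ∑ a, π s a = 1)
    (N : ℕ) (hN : 1 ≤ N)
    (πseq : Fin N → (S → A → ℝ)) (hπseq : ∀ n, πseq n ∈ Pol)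
    (rhat : Fin N → S → A → ℝ) (γ R εclass : ℝ)
    -- (i) estimation error of the density-ratio costs
    (hest : ∀ n : Fin N,
      ∑ s : S, avgStateDist ρ₀ P (πseq n) T s *
        ∑ a : A, πstar s a * |rhat n s a - (πseq n s a / πstar s a - 1)| ≤ γ)
    -- (ii) no-regret bound on the estimated losses
    (hregret :
      (∑ n : Fin N, ∑ s : S, avgStateDist ρ₀ P (πseq n) T s *
          ∑ a : A, πseq n s a * rhat n s a) -
        Pol.inf' ⟨πstar, hπstarmem⟩ (fun π => ∑ n : Fin N,
          ∑ s : S, avgStateDist ρ₀ P (πseq n) T s *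
            ∑ a : A, π s a * rhat n s a) ≤ R)
    -- definition of the best-in-class cost-sensitive classification error
    (hεclass : εclass = Pol.inf' ⟨πstar, hπstarmem⟩ (fun π =>
      (1 / (N : ℝ)) * ∑ n : Fin N,
        ∑ s : S, avgStateDist ρ₀ P (πseq n) T s *
          ∑ a : A, π s a * (πseq n s a / πstar s a - 1))) :
    ∃ n : Fin N,
      ∑ τ : S × (Fin T → A × S),
          trajProb ρ₀ P (πseq n) τ *
            Real.log (trajProb ρ₀ P (πseq n) τ / trajProb ρ₀ P πstar τ) ≤
        (T : ℝ) * ((1 + 1 / c) * γ + εclass + R / (N : ℝ)) := by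
  classical
  have hc0 : (c:ℝ) ≠ 0 := ne_of_gt hc
  have hNR : (0:ℝ) < (N:ℝ) := by exact_mod_cast hN
  have hN0 : (N:ℝ) ≠ 0 := ne_of_gt hNR
  have hπstarpos : ∀ s a, 0 < πstar s a := fun s a => lt_of_lt_of_le hc (hπstarlb s a)
  have hπseqpos : ∀ n s a, 0 < πseq n s a := fun n => hPolpos _ (hπseq n)
  have hπseqsum : ∀ n s, ∑ a, πseq n s a = 1 := fun n => hPolsum _ (hπseq n)
  have hDnn : ∀ (n : Fin N) (s : S), 0 ≤ avgStateDist ρ₀ P (πseq n) T s := by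
    intro n s
    unfold avgStateDist
    refine mul_nonneg (by positivity) (Finset.sum_nonneg fun t _ => ?_)
    exact DRE.stateDist_nonneg ρ₀ P (πseq n) (fun s => (hρ₀pos s).le)
      (fun s a => (hπseqpos n s a).le) (fun s a s' => (hPpos s a s').le) t s
  have hγ : 0 ≤ γ := by
    refine le_trans ?_ (hest ⟨0, hN⟩)
    refine Finset.sum_nonneg fun s _ => mul_nonneg (hDnn _ s)
      (Finset.sum_nonneg fun a _ => ?_)
    exact mul_nonneg (le_of_lt (hπstarpos s a)) (abs_nonneg _)
  obtain ⟨πt, hπtmem, hπt⟩ := Finset.exists_mem_eq_inf'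
    (⟨πstar, hπstarmem⟩ : Pol.Nonempty)
    (fun π => (1 / (N : ℝ)) * ∑ n : Fin N, ∑ s : S, avgStateDist ρ₀ P (πseq n) T s *
      ∑ a : A, π s a * (πseq n s a / πstar s a - 1))
  have hπtub : ∀ s a, πt s a ≤ 1 := by
    intro s a
    have h := Finset.single_le_sum (f := fun a' => πt s a')
      (fun a' _ => (hPolpos _ hπtmem s a').le) (Finset.mem_univ a)
    rw [hPolsum _ hπtmem s] at h
    exact h
  have hπsequb : ∀ (n : Fin N) s a, πseq n s a ≤ 1 := by
    intro n s a
    have h := Finset.single_le_sum (f := fun a' => πseq n s a')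
      (fun a' _ => (hπseqpos n s a').le) (Finset.mem_univ a)
    rw [hπseqsum n s] at h
    exact h
  have hεeq : (∑ n : Fin N, ∑ s : S, avgStateDist ρ₀ P (πseq n) T s *
      ∑ a : A, πt s a * (πseq n s a / πstar s a - 1)) = (N:ℝ) * εclass := by
    rw [hεclass, hπt]
    field_simp
  have hreg2 : (∑ n : Fin N, ∑ s : S, avgStateDist ρ₀ P (πseq n) T s *
        ∑ a : A, πseq n s a * rhat n s a)
      ≤ R + ∑ n : Fin N, ∑ s : S, avgStateDist ρ₀ P (πseq n) T s *
        ∑ a : A, πt s a * rhat n s a := by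
    have h1 : Pol.inf' ⟨πstar, hπstarmem⟩ (fun π => ∑ n : Fin N,
          ∑ s : S, avgStateDist ρ₀ P (πseq n) T s *
            ∑ a : A, π s a * rhat n s a)
        ≤ ∑ n : Fin N, ∑ s : S, avgStateDist ρ₀ P (πseq n) T s *
            ∑ a : A, πt s a * rhat n s a :=
      Finset.inf'_le _ hπtmem
    linarith
  have key : ∀ n : Fin N,
      (∑ s : S, avgStateDist ρ₀ P (πseq n) T s *
        ∑ a : A, πseq n s a * (πseq n s a / πstar s a - 1))
      ≤ (∑ s : S, avgStateDist ρ₀ P (πseq n) T s *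
          ∑ a : A, πseq n s a * rhat n s a)
        + ((∑ s : S, avgStateDist ρ₀ P (πseq n) T s *
            ∑ a : A, πt s a * (πseq n s a / πstar s a - 1))
          - (∑ s : S, avgStateDist ρ₀ P (πseq n) T s *
            ∑ a : A, πt s a * rhat n s a)) + γ / c := by
    intro n
    have hXeq : (∑ s : S, avgStateDist ρ₀ P (πseq n) T s *
          ∑ a : A, (πseq n s a - πt s a) * ((πseq n s a / πstar s a - 1) - rhat n s a))
        = (∑ s : S, avgStateDist ρ₀ P (πseq n) T s *
            ∑ a : A, πseq n s a * (πseq n s a / πstar s a - 1))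
          - (∑ s : S, avgStateDist ρ₀ P (πseq n) T s *
            ∑ a : A, πseq n s a * rhat n s a)
          + ((∑ s : S, avgStateDist ρ₀ P (πseq n) T s *
            ∑ a : A, πt s a * rhat n s a)
          - (∑ s : S, avgStateDist ρ₀ P (πseq n) T s *
            ∑ a : A, πt s a * (πseq n s a / πstar s a - 1))) := by
      rw [← Finset.sum_sub_distrib, ← Finset.sum_sub_distrib, ← Finset.sum_add_distrib]
      refine Finset.sum_congr rfl fun s _ => ?_
      have hinner : (∑ a : A, (πseq n s a - πt s a) *
            ((πseq n s a / πstar s a - 1) - rhat n s a))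
          = (∑ a : A, πseq n s a * (πseq n s a / πstar s a - 1))
            - (∑ a : A, πseq n s a * rhat n s a)
            + ((∑ a : A, πt s a * rhat n s a)
            - (∑ a : A, πt s a * (πseq n s a / πstar s a - 1))) := by
        rw [← Finset.sum_sub_distrib, ← Finset.sum_sub_distrib, ← Finset.sum_add_distrib]
        exact Finset.sum_congr rfl fun a _ => by ring
      rw [hinner]
      ring
    have hXle : (∑ s : S, avgStateDist ρ₀ P (πseq n) T s *
          ∑ a : A, (πseq n s a - πt s a) * ((πseq n s a / πstar s a - 1) - rhat n s a))
        ≤ γ / c := by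
      have step : ∀ s : S, (∑ a : A, (πseq n s a - πt s a) *
            ((πseq n s a / πstar s a - 1) - rhat n s a))
          ≤ (1/c) * ∑ a : A, πstar s a * |rhat n s a - (πseq n s a / πstar s a - 1)| := by
        intro s
        rw [Finset.mul_sum]
        refine Finset.sum_le_sum fun a _ => ?_
        have h1 : πseq n s a ≤ 1 := hπsequb n s a
        have h2 : πt s a ≤ 1 := hπtub s a
        have h3 : 0 ≤ πseq n s a := (hπseqpos n s a).le
        have h4 : 0 ≤ πt s a := (hPolpos _ hπtmem s a).le
        have habs : |πseq n s a - πt s a| ≤ 1 := abs_le.mpr ⟨by linarith, by linarith⟩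
        have hstar : (1:ℝ) ≤ (1/c) * πstar s a := by
          rw [div_mul_eq_mul_div, one_mul, le_div_iff₀ hc, one_mul]
          exact hπstarlb s a
        calc (πseq n s a - πt s a) * ((πseq n s a / πstar s a - 1) - rhat n s a)
            ≤ |(πseq n s a - πt s a) * ((πseq n s a / πstar s a - 1) - rhat n s a)| :=
              le_abs_self _
          _ = |πseq n s a - πt s a| * |rhat n s a - (πseq n s a / πstar s a - 1)| := by
              rw [abs_mul, abs_sub_comm (πseq n s a / πstar s a - 1) (rhat n s a)]
          _ ≤ 1 * |rhat n s a - (πseq n s a / πstar s a - 1)| :=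
              mul_le_mul_of_nonneg_right habs (abs_nonneg _)
          _ ≤ ((1/c) * πstar s a) * |rhat n s a - (πseq n s a / πstar s a - 1)| :=
              mul_le_mul_of_nonneg_right hstar (abs_nonneg _)
          _ = (1/c) * (πstar s a * |rhat n s a - (πseq n s a / πstar s a - 1)|) := by
              ring
      calc (∑ s : S, avgStateDist ρ₀ P (πseq n) T s *
            ∑ a : A, (πseq n s a - πt s a) * ((πseq n s a / πstar s a - 1) - rhat n s a))
          ≤ ∑ s : S, avgStateDist ρ₀ P (πseq n) T s *
              ((1/c) * ∑ a : A, πstar s a * |rhat n s a - (πseq n s a / πstar s a - 1)|) :=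
            Finset.sum_le_sum fun s _ => mul_le_mul_of_nonneg_left (step s) (hDnn n s)
        _ = (1/c) * ∑ s : S, avgStateDist ρ₀ P (πseq n) T s *
              ∑ a : A, πstar s a * |rhat n s a - (πseq n s a / πstar s a - 1)| := by
            rw [Finset.mul_sum]
            exact Finset.sum_congr rfl fun s _ => by ring
        _ ≤ (1/c) * γ := by
            refine mul_le_mul_of_nonneg_left (hest n) ?_
            positivity
        _ = γ / c := by ring
    linarith [hXeq ▸ hXle]
  have main : (∑ n : Fin N, ∑ s : S, avgStateDist ρ₀ P (πseq n) T s *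
        ∑ a : A, πseq n s a * (πseq n s a / πstar s a - 1))
      ≤ (N:ℝ) * ((1 + 1/c) * γ + εclass + R / (N:ℝ)) := by
    have h1 := Finset.sum_le_sum (s := Finset.univ) fun n _ => key n
    have h2 : (∑ _n : Fin N, ((∑ s : S, avgStateDist ρ₀ P (πseq _n) T s *
          ∑ a : A, πseq _n s a * rhat _n s a)
        + ((∑ s : S, avgStateDist ρ₀ P (πseq _n) T s *
            ∑ a : A, πt s a * (πseq _n s a / πstar s a - 1))
          - (∑ s : S, avgStateDist ρ₀ P (πseq _n) T s *
            ∑ a : A, πt s a * rhat _n s a)) + γ / c))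
        = (∑ n : Fin N, ∑ s : S, avgStateDist ρ₀ P (πseq n) T s *
            ∑ a : A, πseq n s a * rhat n s a)
          + ((∑ n : Fin N, ∑ s : S, avgStateDist ρ₀ P (πseq n) T s *
              ∑ a : A, πt s a * (πseq n s a / πstar s a - 1))
            - (∑ n : Fin N, ∑ s : S, avgStateDist ρ₀ P (πseq n) T s *
              ∑ a : A, πt s a * rhat n s a)) + (N:ℝ) * (γ / c) := by
      rw [Finset.sum_add_distrib, Finset.sum_add_distrib, Finset.sum_sub_distrib,
        Finset.sum_const, Finset.card_univ, Fintype.card_fin, nsmul_eq_mul]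
    have expand : (N:ℝ) * ((1 + 1/c) * γ + εclass + R / (N:ℝ))
        = (N:ℝ)*γ + (N:ℝ)*(γ/c) + (N:ℝ)*εclass + R := by
      field_simp
    have hNγ : 0 ≤ (N:ℝ) * γ := mul_nonneg hNR.le hγ
    rw [h2] at h1
    linarith
  have main' : (∑ n : Fin N, ∑ s : S, avgStateDist ρ₀ P (πseq n) T s *
        ∑ a : A, πseq n s a * (πseq n s a / πstar s a - 1))
      ≤ ∑ _n : Fin N, ((1 + 1/c) * γ + εclass + R / (N:ℝ)) := by
    rw [Finset.sum_const, Finset.card_univ, Fintype.card_fin, nsmul_eq_mul]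
    exact main
  have hne : (Finset.univ : Finset (Fin N)).Nonempty := ⟨⟨0, hN⟩, Finset.mem_univ _⟩
  obtain ⟨n, -, hn⟩ := Finset.exists_le_of_sum_le hne main'
  refine ⟨n, ?_⟩
  calc (∑ τ : S × (Fin T → A × S), trajProb ρ₀ P (πseq n) τ *
          Real.log (trajProb ρ₀ P (πseq n) τ / trajProb ρ₀ P πstar τ))
      ≤ ∑ t ∈ Finset.range T, ∑ s : S, stateDist ρ₀ P (πseq n) t s *
          ∑ a : A, πseq n s a * (πseq n s a / πstar s a - 1) :=
        DRE.kl_le ρ₀ P (πseq n) πstar hρ₀pos hPpos (hπseqpos n) hπstarpos (hπseqsum n) hPsum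
    _ = (T:ℝ) * ∑ s : S, avgStateDist ρ₀ P (πseq n) T s *
          ∑ a : A, πseq n s a * (πseq n s a / πstar s a - 1) :=
        DRE.range_eq_T_mul ρ₀ P (πseq n) T hT _
    _ ≤ (T:ℝ) * ((1 + 1/c) * γ + εclass + R / (N:ℝ)) := by
        refine mul_le_mul_of_nonneg_left hn ?_
        positivity

end
end
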